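/- arXiv:math/0409523 — 9 statements merged into one kernel-verified Lean document; each statement's English description precedes it below -/
import Mathlib

section
/- For positive integers n and k with 1 ≤ k ≤ n-1, the polynomial P_{n,k}(x) = ∑_{j=0}^{k} C(n, j) x^j has only simple roots (i.e., P_{n,k} is squarefree as a polynomial over ℚ, equivalently gcd(P_{n,k}, P'_{n,k}) = 1). -/
/-!
The truncation `P = ∑_{j ≤ k} C(n, j) X^j` of `(1 + X)^n` satisfies the differential equation
`(1 + X) P' = n P - (n - k) C(n, k) X^k`, as `(j + 1) C(n, j + 1) = (n - j) C(n, j)`.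
Since `P(0) = 1`, `P` is coprime to `X^k`; when `(n - k) C(n, k)` is a unit the equation then makes
`P` coprime to `(1 + X) P'`, hence to `P'`, i.e. `P` is separable.
-/

open Polynomial Finset

theorem Nat.cast_choose_succ_mul {R : Type*} [CommRing R] (n k : ℕ) :
    (n.choose (k + 1) : R) * (k + 1) = n.choose k * (n - k) := by
  rcases le_or_gt k n with hkn | hnk
  · simpa [Nat.cast_sub hkn] using congrArg (Nat.cast : ℕ → R) (Nat.choose_succ_right_eq n k)
  · simp [Nat.choose_eq_zero_of_lt hnk, Nat.choose_eq_zero_of_lt (hnk.trans k.lt_succ_self)]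

noncomputable def truncBinom (R : Type*) [CommSemiring R] (n k : ℕ) : R[X] :=
  ∑ j ∈ range (k + 1), C (n.choose j : R) * X ^ j

theorem truncBinom_succ {R : Type*} [CommSemiring R] (n k : ℕ) :
    truncBinom R n (k + 1) = truncBinom R n k + C (n.choose (k + 1) : R) * X ^ (k + 1) :=
  sum_range_succ _ _

section CommRing

variable {R : Type*} [CommRing R]

theorem one_add_X_mul_derivative_truncBinom (n k : ℕ) :
    (1 + X) * derivative (truncBinom R n k)
      = (n : R[X]) * truncBinom R n k - C ((n - k : R) * n.choose k) * X ^ k := by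
  induction k with
  | zero => simp [truncBinom]
  | succ k ih =>
    rw [truncBinom_succ, derivative_add, derivative_C_mul_X_pow, add_tsub_cancel_right]
    simp only [map_mul, map_natCast, map_sub, map_add, map_one, Nat.cast_add,
      Nat.cast_one] at ih ⊢
    linear_combination ih + X ^ k * Nat.cast_choose_succ_mul (R := R[X]) n k

theorem truncBinom_coeff_zero (n k : ℕ) : (truncBinom R n k).coeff 0 = 1 := by
  simp [truncBinom, finsetSum_coeff, coeff_X_pow]

theorem isCoprime_truncBinom_X_pow (n k : ℕ) : IsCoprime (truncBinom R n k) (X ^ k) := by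
  refine IsCoprime.pow_right ?_
  obtain ⟨q, hq⟩ : X ∣ truncBinom R n k - 1 := by
    simp [X_dvd_iff, truncBinom_coeff_zero]
  exact ⟨1, -q, by linear_combination hq⟩

theorem separable_truncBinom {n k : ℕ} (h : IsUnit ((n - k : R) * n.choose k)) :
    (truncBinom R n k).Separable := by
  have hcop : IsCoprime (truncBinom R n k)
      (-(1 + X) * derivative (truncBinom R n k) + truncBinom R n k * (n : R[X])) := by
    rw [neg_mul, one_add_X_mul_derivative_truncBinom]
    convert (isCoprime_mul_unit_left_right (h.map C) _ _).2 (isCoprime_truncBinom_X_pow n k)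
      using 1
    ring
  exact hcop.of_add_mul_left_right.of_mul_right_right

end CommRing

open Polynomial in
theorem truncated_binomial_squarefree_general (n k : ℕ) (hn : 1 ≤ n) (hkn : k ≤ n - 1) :
    Squarefree (∑ j ∈ Finset.range (k + 1), C ((n.choose j : ℚ)) * X ^ j) := by
  have hkn : k < n := by omega
  have hsub : (n - k : ℚ) ≠ 0 := sub_ne_zero.2 (by exact_mod_cast hkn.ne')
  have hchoose : (n.choose k : ℚ) ≠ 0 := by exact_mod_cast (Nat.choose_pos hkn.le).ne'
  exact (separable_truncBinom (R := ℚ) (mul_ne_zero hsub hchoose).isUnit).squarefree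

open Polynomial in
theorem truncated_binomial_squarefree (n k : ℕ) (hn : 1 ≤ n) (hk : 1 ≤ k) (hkn : k ≤ n - 1) :
    Squarefree (∑ j ∈ Finset.range (k + 1), C ((n.choose j : ℚ)) * X ^ j) :=
  truncated_binomial_squarefree_general n k hn hkn
end

section
/- For positive integers n and k with k ≤ n-1, the shifted truncated binomial expansion satisfies P_{n,k}(x-1) = ∑_{j=0}^{k} (-1)^{k-j} C(n, j) C(n-j-1, k-j) x^j. -/
/-!
The coefficient of `x^m` in `P_{n,k}(x - 1)` is `∑_{i ≤ k} (-1)^(i-m) C(n,i) C(i,m)`. The identity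
`C(n,i) C(i,m) = C(n,m) C(n-m,i-m)` turns this into `C(n,m)` times a partial alternating sum of the
row `n - m` of Pascal's triangle, which telescopes to `(-1)^(k-m) C(n-m-1,k-m)` when `m ≤ k < n`.
-/

open Finset

theorem alternating_sum_range_choose_succ {R : Type*} [Ring R] (N r : ℕ) :
    ∑ t ∈ range (r + 1), (-1 : R) ^ t * (N + 1).choose t = (-1) ^ r * N.choose r := by
  exact_mod_cast congrArg (Int.cast : ℤ → R) Int.alternating_sum_range_choose_eq_choose

namespace Polynomial

theorem coeff_X_sub_one_pow {R : Type*} [CommRing R] (i m : ℕ) :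
    ((X - 1 : R[X]) ^ i).coeff m = (-1) ^ (i - m) * i.choose m := by
  rw [sub_eq_add_neg, ← C_1, ← C_neg, coeff_X_add_C_pow]

end Polynomial

theorem sum_range_neg_one_pow_mul_choose_mul_choose {R : Type*} [CommRing R] {n k m : ℕ}
    (hmk : m ≤ k) (hkn : k < n) :
    ∑ i ∈ range (k + 1), (-1 : R) ^ (i - m) * (n.choose i * i.choose m) =
      (-1) ^ (k - m) * n.choose m * (n - m - 1).choose (k - m) := by
  have hlow : ∑ i ∈ range m, (-1 : R) ^ (i - m) * (n.choose i * i.choose m) = 0 :=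
    sum_eq_zero fun i hi => by simp [Nat.choose_eq_zero_of_lt (mem_range.mp hi)]
  obtain ⟨N, hN⟩ : ∃ N, n - m = N + 1 := ⟨n - m - 1, by omega⟩
  rw [show k + 1 = m + (k - m + 1) by omega, sum_range_add, hlow, zero_add]
  simp_rw [Nat.add_sub_cancel_left, ← Nat.cast_mul, Nat.choose_mul (Nat.le_add_right m _),
    Nat.add_sub_cancel_left, hN, Nat.cast_mul, mul_left_comm _ (n.choose m : R), ← mul_sum,
    alternating_sum_range_choose_succ]
  rw [Nat.add_sub_cancel]
  ring

open Polynomial in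
theorem truncated_binomial_shift_general (n k : ℕ) (hn : 1 ≤ n) (hkn : k ≤ n - 1) :
    (∑ j ∈ Finset.range (k + 1), C ((n.choose j : ℚ)) * X ^ j).comp (X - 1) =
      ∑ j ∈ Finset.range (k + 1),
        C ((-1 : ℚ) ^ (k - j) * (n.choose j : ℚ) * ((n - j - 1).choose (k - j) : ℚ)) * X ^ j := by
  ext m
  simp only [Polynomial.sum_comp, mul_comp, C_comp, pow_comp, X_comp, finsetSum_coeff, coeff_C_mul,
    coeff_X_sub_one_pow, coeff_X_pow, mul_ite, mul_one, mul_zero, sum_ite_eq, mem_range]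
  split_ifs with hm
  · rw [← sum_range_neg_one_pow_mul_choose_mul_choose (by omega) (by omega)]
    exact sum_congr rfl fun i _ => by ring
  · exact sum_eq_zero fun i hi => by
      simp [Nat.choose_eq_zero_of_lt ((mem_range.mp hi).trans_le (not_lt.mp hm))]

open Polynomial in
theorem truncated_binomial_shift (n k : ℕ) (hn : 1 ≤ n) (hk : 1 ≤ k) (hkn : k ≤ n - 1) :
    (∑ j ∈ Finset.range (k + 1), C ((n.choose j : ℚ)) * X ^ j).comp (X - 1) =
      ∑ j ∈ Finset.range (k + 1),
        C ((-1 : ℚ) ^ (k - j) * (n.choose j : ℚ) * ((n - j - 1).choose (k - j) : ℚ)) * X ^ j :=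
  truncated_binomial_shift_general n k hn hkn
end

section
/- If n is a composite positive integer (n > 1 and n is not prime), then the polynomial (x+1)^n - x^n is reducible over ℚ. -/
open Polynomial in
theorem reducible_pow_sub_pow_of_composite (n : ℕ) (hn : 1 < n) (hnp : ¬ n.Prime) :
    ∃ g h : ℚ[X], 0 < g.degree ∧ 0 < h.degree ∧
      ((X + 1) ^ n - X ^ n : ℚ[X]) = g * h := by
  obtain ⟨a, ⟨k, hk⟩, ha2, haltn⟩ := Nat.exists_dvd_of_not_prime2 hn hnp
  set g : ℚ[X] := (X + 1) ^ a - X ^ a with hgdef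
  have hdvd : g ∣ ((X + 1) ^ n - X ^ n : ℚ[X]) := by
    rw [hk, pow_mul, pow_mul]
    exact sub_dvd_pow_sub_pow _ _ k
  obtain ⟨h, hh⟩ := hdvd
  -- coefficient computations
  have hcoeff : ∀ m : ℕ, 2 ≤ m → (((X + 1) ^ m - X ^ m : ℚ[X])).coeff (m - 1) = m := by
    intro m hm
    rw [coeff_sub, coeff_X_add_one_pow, coeff_X_pow]
    have h1 : m - 1 ≠ m := by omega
    have h2 : m.choose (m - 1) = m := by
      have := Nat.choose_symm (n := m) (k := 1) (by omega)
      rw [this, Nat.choose_one_right]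
    rw [if_neg h1, h2]
    simp
  have hlhs_ne : ((X + 1) ^ n - X ^ n : ℚ[X]) ≠ 0 := by
    intro h0
    have hne : (n : ℚ) ≠ 0 := by exact_mod_cast (by omega : n ≠ 0)
    apply hne
    rw [← hcoeff n hn, h0, coeff_zero]
  have hg_coeff : g.coeff (a - 1) ≠ 0 := by
    rw [hgdef, hcoeff a ha2]
    exact_mod_cast (by omega : a ≠ 0)
  have hg_natDeg : a - 1 ≤ g.natDegree := le_natDegree_of_ne_zero hg_coeff
  have hg_pos : 0 < g.natDegree := by omega
  have hg_ne : g ≠ 0 := fun h0 => by simp [h0] at hg_coeff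
  have hh_ne : h ≠ 0 := by
    intro h0; rw [h0, mul_zero] at hh; exact hlhs_ne hh
  -- monicity
  have m1 : ((X + 1 : ℚ[X]) ^ a).Monic := by
    have : ((X : ℚ[X]) + 1).Monic := by simpa using monic_X_add_C (1 : ℚ)
    exact this.pow a
  have m2 : ((X : ℚ[X]) ^ a).Monic := monic_X_pow a
  -- degree of g is < a
  have hdeg1 : ((X + 1 : ℚ[X]) ^ a).degree = a := by
    have hd : ((X : ℚ[X]) + 1).degree = 1 := by simpa using degree_X_add_C (1 : ℚ)
    rw [degree_pow, hd]
    simp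
  have hdeg2 : ((X : ℚ[X]) ^ a).degree = a := by
    rw [degree_pow, degree_X]
    simp
  have hg_lt : g.degree < a := by
    rw [hgdef]
    have := degree_sub_lt (p := (X + 1 : ℚ[X]) ^ a) (q := (X : ℚ[X]) ^ a)
      (by rw [hdeg1, hdeg2]) m1.ne_zero (m1.leadingCoeff.trans m2.leadingCoeff.symm)
    rwa [hdeg1] at this
  have hg_nat_le : g.natDegree ≤ a - 1 := by
    have := (natDegree_lt_iff_degree_lt (n := a) hg_ne).mpr (by exact_mod_cast hg_lt)
    omega
  have hlhs_natDeg : n - 1 ≤ ((X + 1) ^ n - X ^ n : ℚ[X]).natDegree := by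
    apply le_natDegree_of_ne_zero
    rw [hcoeff n hn]
    exact_mod_cast (by omega : n ≠ 0)
  have hmul : ((X + 1) ^ n - X ^ n : ℚ[X]).natDegree = g.natDegree + h.natDegree := by
    rw [hh, natDegree_mul hg_ne hh_ne]
  have hh_pos : 0 < h.natDegree := by omega
  exact ⟨g, h, natDegree_pos_iff_degree_pos.mp hg_pos,
    natDegree_pos_iff_degree_pos.mp hh_pos, hh⟩
end

section
/- Let n, k be integers with 1 ≤ k ≤ n-1. If there is a prime p > k with p dividing n and p² not dividing n, then the polynomial P_{n,k}(x-1) = ∑_{j=0}^{k} c_j x^j with c_j = (-1)^{k-j} C(n,j) C(n-j-1,k-j) is irreducible over ℚ. (Consequently P_{n,k}(x) is irreducible.) -/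
-- p doesn't divide (n-1).descFactorial m for m ≤ k
lemma aux_not_dvd_descFactorial (n k p m : ℕ) (hp : p.Prime) (hpn : p ∣ n)
    (hpk : k < p) (hm : m ≤ k) (hkn : k < n) : ¬ p ∣ (n - 1).descFactorial m := by
  rw [Nat.descFactorial_eq_prod_range]
  intro h
  obtain ⟨i, hi, hdvd⟩ := (hp.prime.dvd_finset_prod_iff _).mp h
  simp only [Finset.mem_range] at hi
  have h1 : p ∣ n - (n - 1 - i) := Nat.dvd_sub hpn hdvd
  have h2 : n - (n - 1 - i) = i + 1 := by omega
  rw [h2] at h1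
  have := Nat.le_of_dvd (by omega) h1
  omega

lemma aux_not_dvd_choose (n k p : ℕ) (hp : p.Prime) (hpn : p ∣ n)
    (hpk : k < p) (hkn : k < n) : ¬ p ∣ (n - 1).choose k := by
  intro h
  have := aux_not_dvd_descFactorial n k p k hp hpn hpk le_rfl hkn
  rw [Nat.descFactorial_eq_factorial_mul_choose] at this
  exact this (h.mul_left _)

lemma aux_descFact_eq (n j : ℕ) (hn : 1 ≤ n) (hj : 1 ≤ j) :
    n.descFactorial j = n * (n - 1).descFactorial (j - 1) := by
  obtain ⟨n, rfl⟩ : ∃ m, n = m + 1 := ⟨n - 1, by omega⟩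
  obtain ⟨j, rfl⟩ : ∃ m, j = m + 1 := ⟨j - 1, by omega⟩
  rw [Nat.succ_descFactorial_succ]
  simp

lemma aux_dvd_choose (n k p j : ℕ) (hp : p.Prime) (hpn : p ∣ n)
    (hpk : k < p) (hj1 : 1 ≤ j) (hjk : j ≤ k) (hkn : k < n) : p ∣ n.choose j := by
  have key : p ∣ Nat.factorial j * n.choose j := by
    rw [← Nat.descFactorial_eq_factorial_mul_choose, aux_descFact_eq n j (by omega) hj1]
    exact Dvd.dvd.mul_right hpn _
  rcases (Nat.Prime.dvd_mul hp).mp key with h | h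
  · exact absurd (hp.dvd_factorial.mp h) (by omega)
  · exact h

lemma aux_sq_not_dvd_choose (n k p : ℕ) (hp : p.Prime) (hpn : p ∣ n) (hpn2 : ¬ p ^ 2 ∣ n)
    (hpk : k < p) (hk : 1 ≤ k) (hkn : k < n) : ¬ p ^ 2 ∣ n.choose k := by
  intro h
  have key : p ^ 2 ∣ n * (n - 1).descFactorial (k - 1) := by
    rw [← aux_descFact_eq n k (by omega) hk, Nat.descFactorial_eq_factorial_mul_choose]
    exact h.mul_left _
  have hD : ¬ p ∣ (n - 1).descFactorial (k - 1) :=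
    aux_not_dvd_descFactorial n k p (k - 1) hp hpn hpk (by omega) hkn
  have hcop : Nat.Coprime (p ^ 2) ((n - 1).descFactorial (k - 1)) :=
    Nat.Coprime.pow_left 2 (hp.coprime_iff_not_dvd.mpr hD)
  exact hpn2 (hcop.dvd_of_dvd_mul_right key)

open Polynomial

lemma aux_isUnit_of_isUnit_mirror {K : Type*} [Field K] {f : K[X]} (h : IsUnit f.mirror) :
    IsUnit f := by
  rw [Polynomial.isUnit_iff_degree_eq_zero] at h ⊢
  have hne : f ≠ 0 := by
    intro h0
    rw [h0, mirror_zero] at h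
    simp at h
  have h1 : f.mirror.natDegree = 0 := natDegree_eq_zero_iff_degree_le_zero.mpr (le_of_eq h)
  rw [mirror_natDegree] at h1
  rw [degree_eq_natDegree hne, h1]
  rfl

lemma aux_irreducible_mirror {K : Type*} [Field K] {f : K[X]} (hf : Irreducible f) :
    Irreducible f.mirror := by
  constructor
  · intro h
    exact hf.not_isUnit (by simpa [mirror_mirror] using aux_isUnit_of_isUnit_mirror h)
  · intro a b hab
    have : f = a.mirror * b.mirror := by
      rw [← mirror_mul_of_domain, ← hab, mirror_mirror]
    rcases hf.isUnit_or_isUnit this with h | h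
    · exact Or.inl (aux_isUnit_of_isUnit_mirror h)
    · exact Or.inr (aux_isUnit_of_isUnit_mirror h)

open Polynomial in
theorem irreducible_shifted_of_prime_exactly_divides_n (n k : ℕ) (hk : 1 ≤ k) (hkn : k ≤ n - 1)
    (p : ℕ) (hp : p.Prime) (hpk : k < p) (hpn : p ∣ n) (hpn2 : ¬ p ^ 2 ∣ n) :
    Irreducible (∑ j ∈ Finset.range (k + 1),
      C ((-1 : ℚ) ^ (k - j) * (n.choose j : ℚ) * ((n - j - 1).choose (k - j) : ℚ)) * X ^ j) := by
  have hn0 : n ≠ 0 := by rintro rfl; exact hpn2 (dvd_zero _)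
  have hkn' : k < n := by omega
  -- the mirrored integer polynomial
  set a : ℕ → ℤ := fun j =>
    (-1) ^ j * (n.choose (k - j) : ℤ) * ((n - (k - j) - 1).choose j : ℤ) with ha
  set f : ℤ[X] := ∑ j ∈ Finset.range (k + 1), C (a j) * X ^ j with hfdef
  have hcoeff : ∀ i, f.coeff i = if i ≤ k then a i else 0 := by
    intro i
    simp only [hfdef, finset_sum_coeff, coeff_C_mul, coeff_X_pow, mul_ite, mul_one, mul_zero,
      Finset.sum_ite_eq, Finset.mem_range, Nat.lt_succ_iff]
  have hak : a k = (-1) ^ k * ((n - 1).choose k : ℤ) := by simp [ha]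
  have ha0 : a 0 = (n.choose k : ℤ) := by simp [ha]
  have hchoose_ne : (n - 1).choose k ≠ 0 := (Nat.choose_pos (by omega : k ≤ n - 1)).ne'
  have hak_ne : a k ≠ 0 := by
    rw [hak]
    exact mul_ne_zero (pow_ne_zero _ (by norm_num)) (Int.natCast_ne_zero.mpr hchoose_ne)
  have hfk : f.coeff k = a k := by rw [hcoeff]; simp
  have hf0 : f ≠ 0 := fun h => hak_ne (by rw [← hfk, h, coeff_zero])
  have hdeg : f.natDegree = k := by
    refine le_antisymm ?_ (le_natDegree_of_ne_zero (by rw [hfk]; exact hak_ne))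
    rw [natDegree_le_iff_coeff_eq_zero]
    intro m hm
    rw [hcoeff]
    simp [Nat.not_le.mpr hm, not_le_of_gt hm]
  -- divisibility facts
  have hdvd_int : ∀ i, ((p : ℤ) ∣ a i ↔ p ∣ n.choose (k - i) * (n - (k - i) - 1).choose i) := by
    intro i
    rw [ha]
    simp [Int.natCast_dvd, Int.natAbs_mul, Int.natAbs_pow]
  have hnot_dvd_ak : ¬ (p : ℤ) ∣ a k := by
    rw [hdvd_int]
    simpa using aux_not_dvd_choose n k p hp hpn hpk hkn'
  have hdvd_ai : ∀ i < k, (p : ℤ) ∣ a i := by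
    intro i hi
    rw [hdvd_int]
    exact Dvd.dvd.mul_right
      (aux_dvd_choose n k p (k - i) hp hpn hpk (by omega) (by omega) hkn') _
  have hsq_not_dvd_a0 : ¬ (p : ℤ) ^ 2 ∣ a 0 := by
    rw [ha0]
    intro h
    have : ((p ^ 2 : ℕ) : ℤ) ∣ (n.choose k : ℤ) := by push_cast; exact h
    exact aux_sq_not_dvd_choose n k p hp hpn hpn2 hpk hk hkn' (Int.natCast_dvd_natCast.mp this)
  -- content and primitive part
  set d : ℤ := f.content with hd
  set g0 : ℤ[X] := f.primPart with hg0
  have hfe : ∀ i, f.coeff i = d * g0.coeff i := by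
    intro i
    conv_lhs => rw [f.eq_C_content_mul_primPart]
    rw [coeff_C_mul]
  have hpd : ¬ (p : ℤ) ∣ d := fun h => hnot_dvd_ak (by rw [← hfk, hfe]; exact h.mul_right _)
  have hg0deg : g0.natDegree = k := by rw [hg0, natDegree_primPart, hdeg]
  have hg0ne : g0 ≠ 0 := f.primPart_ne_zero
  have hg0degree : g0.degree = (k : WithBot ℕ) := by rw [degree_eq_natDegree hg0ne, hg0deg]
  have hpz : Prime (p : ℤ) := Nat.prime_iff_prime_int.mp hp
  -- Eisenstein
  have irr_g0 : Irreducible g0 := by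
    apply irreducible_of_eisenstein_criterion
      ((Ideal.span_singleton_prime (by exact_mod_cast hp.ne_zero)).mpr hpz)
    · rw [Ideal.mem_span_singleton]
      intro h
      rw [leadingCoeff, hg0deg] at h
      exact hnot_dvd_ak (by rw [← hfk, hfe]; exact Dvd.dvd.mul_left h _)
    · intro m hm
      rw [hg0degree] at hm
      have hmk : m < k := by exact_mod_cast hm
      rw [Ideal.mem_span_singleton]
      have h1 : (p : ℤ) ∣ d * g0.coeff m := by rw [← hfe, hcoeff]; simp [hmk.le, hdvd_ai m hmk]
      exact (hpz.dvd_mul.mp h1).resolve_left hpd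
    · rw [hg0degree]
      exact_mod_cast hk
    · rw [Ideal.span_singleton_pow, Ideal.mem_span_singleton]
      intro h
      apply hsq_not_dvd_a0
      have h1 : a 0 = d * g0.coeff 0 := by rw [← hfe, hcoeff]; simp
      rw [h1]
      exact h.mul_left _
    · exact f.isPrimitive_primPart
  -- Gauss
  have irr_g0q : Irreducible (g0.map (algebraMap ℤ ℚ)) :=
    (f.isPrimitive_primPart.irreducible_iff_irreducible_map_fraction_map).mp irr_g0
  set fq : ℚ[X] := f.map (algebraMap ℤ ℚ) with hfq
  have hd0 : d ≠ 0 := fun h => hf0 (content_eq_zero_iff.mp h)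
  have irr_fq : Irreducible fq := by
    have : fq = g0.map (algebraMap ℤ ℚ) * C ((d : ℚ)) := by
      conv_lhs => rw [hfq, f.eq_C_content_mul_primPart]
      rw [Polynomial.map_mul, map_C, mul_comm]
      rfl
    rw [this]
    exact (associated_mul_unit_left _ _
      (isUnit_C.mpr (isUnit_iff_ne_zero.mpr (by exact_mod_cast hd0)))).symm.irreducible irr_g0q
  -- coefficients of fq
  have hfqcoeff : ∀ i, fq.coeff i = ((if i ≤ k then a i else 0 : ℤ) : ℚ) := by
    intro i
    rw [hfq, coeff_map, hcoeff]
    rfl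
  have hfqdeg : fq.natDegree = k := by
    refine le_antisymm (le_trans natDegree_map_le (le_of_eq hdeg)) ?_
    apply le_natDegree_of_ne_zero
    rw [hfqcoeff]
    simpa using hak_ne
  have hfqtrail : fq.natTrailingDegree = 0 := by
    rw [natTrailingDegree_eq_zero]
    right
    rw [hfqcoeff]
    simp only [if_pos (Nat.zero_le k), ha0]
    exact_mod_cast (Nat.choose_pos hkn'.le).ne'
  -- identify the goal with fq.mirror
  have hgoal : (∑ j ∈ Finset.range (k + 1),
      C ((-1 : ℚ) ^ (k - j) * (n.choose j : ℚ) * ((n - j - 1).choose (k - j) : ℚ)) * X ^ j)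
      = fq.mirror := by
    apply Polynomial.ext
    intro i
    rw [coeff_mirror, hfqdeg, hfqtrail]
    simp only [add_zero]
    rw [finset_sum_coeff]
    simp only [coeff_C_mul, coeff_X_pow, mul_ite, mul_one, mul_zero,
      Finset.sum_ite_eq, Finset.mem_range, Nat.lt_succ_iff]
    by_cases hik : i ≤ k
    · rw [if_pos hik, revAt_le hik, hfqcoeff, if_pos (Nat.sub_le k i)]
      have h1 : a (k - i) = (-1) ^ (k - i) * (n.choose i : ℤ) * ((n - i - 1).choose (k - i) : ℤ) := by
        rw [ha]
        simp only []
        rw [show k - (k - i) = i by omega]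
      rw [h1]
      push_cast
      ring
    · rw [if_neg hik, revAt_eq_self_of_lt (Nat.not_le.mp hik), hfqcoeff,
        if_neg hik, Int.cast_zero]
  rw [hgoal]
  exact aux_irreducible_mirror irr_fq
end

section
/- Let n, k be integers with 1 ≤ k ≤ n-1. If there is a prime p > k that divides n-k exactly once (p | n-k, p² ∤ n-k), then P_{n,k}(x) = ∑_{j=0}^{k} C(n, j) x^j is irreducible over ℚ. -/
open Polynomial Finset

lemma alt_sum_choose (n : ℕ) (hn : 1 ≤ n) (k : ℕ) :
    ∑ j ∈ Finset.range (k+1), (-1:ℤ)^j * n.choose j = (-1)^k * ((n-1).choose k) := by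
  induction k with
  | zero => simp
  | succ k ih =>
    rw [Finset.sum_range_succ, ih]
    obtain ⟨m, rfl⟩ : ∃ m, n = m + 1 := ⟨n - 1, (Nat.succ_pred_eq_of_pos hn).symm⟩
    rw [Nat.add_sub_cancel, Nat.choose_succ_succ' m k]
    push_cast
    ring

lemma choose_congr (n k p : ℕ) (hp : p.Prime) (hkn : k ≤ n) (hpk : k < p)
    (hpn : p ∣ n - k) (j : ℕ) (hj : j ≤ k) :
    ((n.choose j : ZMod p)) = (k.choose j : ZMod p) := by
  haveI : Fact p.Prime := ⟨hp⟩
  have hfac : ((Nat.factorial j : ZMod p)) ≠ 0 := by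
    simpa [Nat.cast_eq_zero, ← Nat.prime_iff] using
      fun h => absurd ((Nat.Prime.dvd_factorial hp).mp ((ZMod.natCast_eq_zero_iff _ _).mp h)) (by omega)
  have key : ((Nat.factorial j : ZMod p)) * (n.choose j : ZMod p) = ((Nat.factorial j : ZMod p)) * (k.choose j : ZMod p) := by
    have h1 : ((n.descFactorial j : ZMod p)) = ((k.descFactorial j : ZMod p)) := by
      rw [Nat.descFactorial_eq_prod_range, Nat.descFactorial_eq_prod_range]
      push_cast
      apply Finset.prod_congr rfl
      intro i hi
      have hi' : i < j := Finset.mem_range.mp hi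
      have h2 : ((n - i : ℕ) : ZMod p) = (n : ZMod p) - (i : ZMod p) := by
        have : i ≤ n := by omega
        push_cast [this]; ring
      have h3 : ((k - i : ℕ) : ZMod p) = (k : ZMod p) - (i : ZMod p) := by
        have : i ≤ k := by omega
        push_cast [this]; ring
      rw [h2, h3]
      have h4 : (n : ZMod p) = (k : ZMod p) := by
        have h5 : ((n - k : ℕ) : ZMod p) = 0 := (ZMod.natCast_eq_zero_iff _ _).mpr hpn
        have h6 : ((n - k : ℕ) : ZMod p) = (n : ZMod p) - (k : ZMod p) := by
          push_cast [hkn]; ring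
        rw [h6] at h5
        exact sub_eq_zero.mp h5
      rw [h4]
    calc ((Nat.factorial j : ZMod p)) * (n.choose j : ZMod p) = (n.descFactorial j : ZMod p) := by
          rw [← Nat.cast_mul, ← Nat.descFactorial_eq_factorial_mul_choose]
      _ = (k.descFactorial j : ZMod p) := h1
      _ = ((Nat.factorial j : ZMod p)) * (k.choose j : ZMod p) := by
          rw [← Nat.cast_mul, ← Nat.descFactorial_eq_factorial_mul_choose]
  exact mul_left_cancel₀ hfac key

lemma not_p_sq_dvd_choose (n k p : ℕ) (hk : 1 ≤ k) (hkn : k + 1 ≤ n) (hp : p.Prime) (hpk : k < p)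
    (hpn : p ∣ n - k) (hpn2 : ¬ p ^ 2 ∣ n - k) : ¬ p ^ 2 ∣ (n-1).choose k := by
  intro hdvd
  have hD : (n-1).descFactorial k = Nat.factorial k * (n-1).choose k :=
    Nat.descFactorial_eq_factorial_mul_choose _ _
  have hsplit : (n-1).descFactorial k = (∏ i ∈ Finset.range (k-1), (n - 1 - i)) * (n - k) := by
    rw [Nat.descFactorial_eq_prod_range]
    have : k = (k-1) + 1 := by omega
    rw [this, Finset.prod_range_succ]
    congr 1
    omega
  obtain ⟨m, hm⟩ := hpn
  have hpm : ¬ p ∣ m := fun h => hpn2 (by obtain ⟨c, rfl⟩ := h; exact ⟨c, by rw [hm]; ring⟩)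
  have hd2 : p ^ 2 ∣ Nat.factorial k * ((∏ i ∈ Finset.range (k-1), (n - 1 - i)) * (p * m)) := by
    rw [← hm, ← hsplit, hD]
    exact (hdvd.mul_left _).mul_left _
  have hd3 : p ∣ Nat.factorial k * ((∏ i ∈ Finset.range (k-1), (n - 1 - i)) * m) := by
    apply (Nat.mul_dvd_mul_iff_left hp.pos).mp
    rw [show p * (Nat.factorial k * ((∏ i ∈ Finset.range (k-1), (n - 1 - i)) * m)) =
        Nat.factorial k * ((∏ i ∈ Finset.range (k-1), (n - 1 - i)) * (p * m)) by ring, ← pow_two]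
    exact hd2
  rcases (Nat.Prime.dvd_mul hp).mp hd3 with h | h
  · exact absurd ((Nat.Prime.dvd_factorial hp).mp h) (by omega)
  rcases (Nat.Prime.dvd_mul hp).mp h with h | h
  · obtain ⟨i, hi, hdvd'⟩ := (hp.prime.dvd_finset_prod_iff _).mp h
    have hi' : i < k - 1 := Finset.mem_range.mp hi
    have hds : p ∣ (n - 1 - i) - (n - k) := Nat.dvd_sub hdvd' ⟨m, hm⟩
    have he : (n - 1 - i) - (n - k) = k - 1 - i := by omega
    rw [he] at hds
    have := Nat.le_of_dvd (by omega) hds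
    omega
  · exact hpm h

open Polynomial in
theorem irreducible_truncated_binomial_of_prime_exactly_divides_sub (n k : ℕ) (hk : 1 ≤ k)
    (hkn : k ≤ n - 1) (p : ℕ) (hp : p.Prime) (hpk : k < p) (hpn : p ∣ n - k)
    (hpn2 : ¬ p ^ 2 ∣ n - k) :
    Irreducible (∑ j ∈ Finset.range (k + 1), C ((n.choose j : ℚ)) * X ^ j) := by
  haveI : Fact p.Prime := ⟨hp⟩
  have hn : k + 1 ≤ n := by omega
  set Pz : ℤ[X] := ∑ j ∈ Finset.range (k+1), C ((n.choose j : ℤ)) * X ^ j with hPzdef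
  -- coefficients of Pz
  have hcoeff : ∀ m, Pz.coeff m = if m ≤ k then (n.choose m : ℤ) else 0 := by
    intro m
    rw [hPzdef, Polynomial.finset_sum_coeff]
    simp only [Polynomial.coeff_C_mul, Polynomial.coeff_X_pow, mul_ite, mul_one, mul_zero]
    rw [Finset.sum_ite_eq (Finset.range (k+1)) m]
    simp [Nat.lt_succ_iff]
  have hck : ((n.choose k : ℤ)) ≠ 0 := by
    exact_mod_cast (Nat.choose_pos (by omega)).ne'
  have hPzdeg : Pz.natDegree = k := by
    apply le_antisymm
    · rw [Polynomial.natDegree_le_iff_coeff_eq_zero]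
      intro N hN
      rw [hcoeff]; simp [Nat.not_le.mpr hN]
    · exact Polynomial.le_natDegree_of_ne_zero (by rw [hcoeff]; simpa using hck)
  -- mod p, Pz is (X+1)^k
  have hmap : Pz.map (Int.castRingHom (ZMod p)) = (X + 1)^k := by
    rw [hPzdef, Polynomial.map_sum]
    rw [add_pow]
    apply Finset.sum_congr rfl
    intro j hj
    have hj' : j ≤ k := by simpa [Nat.lt_succ_iff] using hj
    rw [Polynomial.map_mul, Polynomial.map_C, Polynomial.map_pow, Polynomial.map_X]
    have : (Int.castRingHom (ZMod p)) ((n.choose j : ℤ)) = ((k.choose j : ZMod p)) := by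
      simpa using choose_congr n k p hp (by omega) hpk hpn j hj'
    rw [this, one_pow, mul_one, mul_comm]
    try congr 1
    try simp
  set Tz : ℤ[X] := Pz.comp (X - Polynomial.C 1) with hTzdef
  have hTmap : Tz.map (Int.castRingHom (ZMod p)) = X^k := by
    rw [hTzdef, Polynomial.map_comp, hmap]
    simp [Polynomial.map_sub, Polynomial.add_comp, Polynomial.pow_comp, Polynomial.sub_comp]
  have hTdeg : Tz.natDegree = k := by
    rw [hTzdef, Polynomial.natDegree_comp, hPzdeg, Polynomial.natDegree_X_sub_C, mul_one]
  -- Eisenstein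
  have hEis : Tz.IsEisensteinAt (Ideal.span {(p : ℤ)}) := by
    constructor
    · rw [Ideal.mem_span_singleton]
      intro hdvd
      have hlead : Tz.leadingCoeff = (n.choose k : ℤ) := by
        rw [hTzdef, Polynomial.leadingCoeff_comp (by rw [Polynomial.natDegree_X_sub_C]; exact one_ne_zero)]
        rw [(Polynomial.monic_X_sub_C (1:ℤ)).leadingCoeff, one_pow, mul_one]
        rw [Polynomial.leadingCoeff, hPzdeg, hcoeff]
        simp
      rw [hlead] at hdvd
      have : ((n.choose k : ℤ) : ZMod p) = 0 := by
        rw [ZMod.intCast_zmod_eq_zero_iff_dvd]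
        exact_mod_cast hdvd
      rw [Int.cast_natCast, choose_congr n k p hp (by omega) hpk hpn k le_rfl] at this
      simp at this
    · intro i hi
      rw [hTdeg] at hi
      rw [Ideal.mem_span_singleton]
      have h0 : ((Tz.map (Int.castRingHom (ZMod p))).coeff i) = 0 := by
        rw [hTmap, Polynomial.coeff_X_pow]
        simp [Nat.ne_of_lt hi]
      rw [Polynomial.coeff_map] at h0
      have h1 : ((Tz.coeff i : ℤ) : ZMod p) = 0 := by simpa using h0
      rwa [ZMod.intCast_zmod_eq_zero_iff_dvd] at h1
    · rw [Ideal.span_singleton_pow, Ideal.mem_span_singleton]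
      have hc0 : Tz.coeff 0 = (-1)^k * ((n-1).choose k : ℤ) := by
        rw [Polynomial.coeff_zero_eq_eval_zero, hTzdef, Polynomial.eval_comp]
        simp only [Polynomial.eval_sub, Polynomial.eval_X, Polynomial.eval_C, zero_sub]
        rw [hPzdef]
        rw [Polynomial.eval_finset_sum]
        simp only [Polynomial.eval_mul, Polynomial.eval_C, Polynomial.eval_pow, Polynomial.eval_X]
        rw [← alt_sum_choose n (by omega) k]
        apply Finset.sum_congr rfl
        intro j _; ring
      rw [hc0]
      intro hdvd
      have hdvd' : ((p:ℤ))^2 ∣ ((n-1).choose k : ℤ) := by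
        rcases Nat.even_or_odd k with he | ho
        · rwa [he.neg_one_pow, one_mul] at hdvd
        · rw [ho.neg_one_pow, neg_one_mul, dvd_neg] at hdvd
          exact hdvd
      have : (p:ℕ)^2 ∣ (n-1).choose k := by exact_mod_cast hdvd'
      exact not_p_sq_dvd_choose n k p hk hn hp hpk hpn hpn2 this
  have hprime : (Ideal.span {(p : ℤ)}).IsPrime :=
    (Ideal.span_singleton_prime (by exact_mod_cast hp.ne_zero)).mpr ((Nat.prime_iff_prime_int.mp hp))
  have hprim : Tz.IsPrimitive := by
    intro r hr
    obtain ⟨s, hs⟩ := hr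
    have h1 : Tz.eval 1 = 1 := by
      rw [hTzdef, Polynomial.eval_comp]
      simp only [Polynomial.eval_sub, Polynomial.eval_X, Polynomial.eval_C, sub_self]
      rw [hPzdef, Polynomial.eval_finset_sum]
      rw [Finset.sum_eq_single 0] <;> simp +contextual [zero_pow]
    have : r ∣ 1 := by
      rw [← h1, hs]
      simp only [Polynomial.eval_mul, Polynomial.eval_C]
      exact Dvd.intro _ rfl
    exact isUnit_of_dvd_one this
  have hTirr : Irreducible Tz := hEis.irreducible hprime hprim (by omega)
  have hPzirr : Irreducible Pz := by
    have heq : (Polynomial.algEquivAevalXAddC (-1 : ℤ)) Pz = Tz := by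
      show Polynomial.aeval (X + Polynomial.C (-1:ℤ)) Pz = Tz
      rw [← Polynomial.comp_eq_aeval, hTzdef]
      congr 1
      rw [map_neg, map_one, sub_eq_add_neg]
    rw [← heq] at hTirr
    exact (MulEquiv.irreducible_iff (Polynomial.algEquivAevalXAddC (-1 : ℤ))).mp hTirr
  have hPzprim : Pz.IsPrimitive := by
    intro r hr
    obtain ⟨s, hs⟩ := hr
    have h1 : Pz.eval 0 = 1 := by
      rw [hPzdef, Polynomial.eval_finset_sum]
      rw [Finset.sum_eq_single 0] <;> simp +contextual [zero_pow]
    have : r ∣ 1 := by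
      rw [← h1, hs]
      simp only [Polynomial.eval_mul, Polynomial.eval_C]
      exact Dvd.intro _ rfl
    exact isUnit_of_dvd_one this
  have hmapQ : Pz.map (algebraMap ℤ ℚ) = ∑ j ∈ Finset.range (k + 1), C ((n.choose j : ℚ)) * X ^ j := by
    rw [hPzdef, Polynomial.map_sum]
    apply Finset.sum_congr rfl
    intro j _
    rw [Polynomial.map_mul, Polynomial.map_C, Polynomial.map_pow, Polynomial.map_X]
    norm_num
  rw [← hmapQ]
  exact (hPzprim.irreducible_iff_irreducible_map_fraction_map).mp hPzirr
end

section
/- If n is prime, then for every k with 1 ≤ k ≤ n-1, the polynomial P_{n,k}(x) = ∑_{j=0}^{k} C(n, j) x^j is irreducible over ℚ. -/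
/-!
Reversing the coefficients of `P_{n,k}` gives `∑_{j ≤ k} C(n, k - j) x^j`, which is Eisenstein at
the prime `n`: it is monic, `n` divides `C(n, i)` for `0 < i < n`, and `n²` does not divide the
constant term `C(n, k)`. Reversal (`Polynomial.mirror`) is a multiplicative involution of `ℤ[X]`,
so `P_{n,k}` is irreducible in `ℤ[X]`; as its constant term is `1` it is primitive, and Gauss's
lemma carries irreducibility over to `ℚ[X]`.
-/

open Polynomial Finset

-- Since `p < p ^ 2`, Legendre's formula leaves room for at most one factor `p` in `p.choose k`.
theorem Nat.Prime.not_sq_dvd_choose {p k : ℕ} (hp : p.Prime) (hkp : k < p) :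
    ¬ p ^ 2 ∣ p.choose k := by
  rw [hp.pow_dvd_iff_le_factorization (Nat.choose_pos hkp.le).ne', not_le, Nat.lt_succ_iff]
  exact factorization_choose_le_one (by nlinarith [hp.two_le])

namespace Polynomial

section Mirror

variable {R : Type*} [Semiring R] [NoZeroDivisors R]

@[simps]
noncomputable def mirrorMulEquiv : R[X] ≃* R[X] where
  toFun := mirror
  invFun := mirror
  left_inv := mirror_involutive
  right_inv := mirror_involutive
  map_mul' p q := mirror_mul_of_domain p q

theorem irreducible_mirror_iff {f : R[X]} : Irreducible f.mirror ↔ Irreducible f :=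
  MulEquiv.irreducible_iff (f := mirrorMulEquiv) (x := f)

end Mirror

theorem IsPrimitive.mirror {R : Type*} [CommSemiring R] [NoZeroDivisors R] {f : R[X]}
    (hf : f.IsPrimitive) : f.mirror.IsPrimitive := by
  intro r hr
  have := _root_.map_dvd (mirrorMulEquiv (R := R)) hr
  rw [mirrorMulEquiv_apply, mirrorMulEquiv_apply, mirror_C, mirror_mirror] at this
  exact hf r this

theorem irreducible_of_eisenstein_criterion_mirror {R : Type*} [CommRing R] [IsDomain R]
    {f : R[X]} {P : Ideal R} (hP : P.IsPrime)
    (hf0 : f.coeff 0 ∉ P) (hfP : ∀ i, i ≠ 0 → f.coeff i ∈ P) (hfd0 : 0 < f.natDegree)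
    (hfl : f.leadingCoeff ∉ P ^ 2) (hu : f.IsPrimitive) : Irreducible f := by
  have htrail : f.natTrailingDegree = 0 :=
    natTrailingDegree_eq_zero.mpr (.inr fun h ↦ hf0 (h ▸ P.zero_mem))
  have hcoeff (i : ℕ) : f.mirror.coeff i = f.coeff (revAt f.natDegree i) := by
    rw [coeff_mirror, htrail, add_zero]
  have hdeg : f.mirror.degree = f.natDegree := by
    rw [degree_eq_natDegree (mirror_eq_zero.not.mpr (ne_zero_of_natDegree_gt hfd0)),
      mirror_natDegree]
  rw [← irreducible_mirror_iff]
  refine irreducible_of_eisenstein_criterion hP ?_ (fun i hi ↦ ?_) ?_ ?_ hu.mirror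
  · rwa [mirror_leadingCoeff, trailingCoeff, htrail]
  · rw [hdeg, Nat.cast_lt] at hi
    rw [hcoeff, revAt_le hi.le]
    exact hfP _ (by omega)
  · rwa [hdeg, Nat.cast_pos]
  · rwa [hcoeff, revAt_zero]

-- The polynomial `P_{n,k}`, with coefficients in `R`.
noncomputable def truncBinomial (R : Type*) [Semiring R] (n k : ℕ) : R[X] :=
  ∑ j ∈ range (k + 1), C (n.choose j : R) * X ^ j

section Semiring

variable {R : Type*} [Semiring R] (n k : ℕ)

theorem coeff_truncBinomial (i : ℕ) :
    (truncBinomial R n k).coeff i = if i ≤ k then (n.choose i : R) else 0 := by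
  simp only [truncBinomial, finsetSum_coeff, coeff_C_mul, coeff_X_pow, mul_ite, mul_one,
    mul_zero, sum_ite_eq, mem_range, Nat.lt_succ_iff]

theorem coeff_zero_truncBinomial : (truncBinomial R n k).coeff 0 = 1 := by
  simp [coeff_truncBinomial]

theorem natDegree_truncBinomial [CharZero R] {n k : ℕ} (hkn : k ≤ n) :
    (truncBinomial R n k).natDegree = k := by
  refine natDegree_eq_of_le_of_coeff_ne_zero ?_ ?_
  · refine (natDegree_le_iff_coeff_eq_zero).mpr fun i hi ↦ ?_
    rw [coeff_truncBinomial, if_neg (by exact_mod_cast hi.not_ge)]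
  · rw [coeff_truncBinomial, if_pos le_rfl]
    exact_mod_cast (Nat.choose_pos hkn).ne'

theorem map_truncBinomial {S : Type*} [Semiring S] (f : R →+* S) :
    (truncBinomial R n k).map f = truncBinomial S n k := by
  simp [truncBinomial, Polynomial.map_sum]

end Semiring

theorem isPrimitive_truncBinomial {R : Type*} [CommSemiring R] (n k : ℕ) :
    (truncBinomial R n k).IsPrimitive := fun r hr ↦
  isUnit_of_dvd_one (coeff_zero_truncBinomial (R := R) n k ▸ (C_dvd_iff_dvd_coeff r _).mp hr 0)

theorem irreducible_truncBinomial_int {n k : ℕ} (hn : n.Prime) (hk : k ≠ 0) (hkn : k < n) :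
    Irreducible (truncBinomial ℤ n k) := by
  have hprime : (Ideal.span {(n : ℤ)}).IsPrime :=
    (Ideal.span_singleton_prime (by exact_mod_cast hn.ne_zero)).mpr (Nat.prime_iff_prime_int.mp hn)
  have hdeg := natDegree_truncBinomial (R := ℤ) hkn.le
  refine irreducible_of_eisenstein_criterion_mirror hprime ?_ (fun i hi ↦ ?_) (by omega) ?_
    (isPrimitive_truncBinomial n k)
  · rw [coeff_zero_truncBinomial, Ideal.mem_span_singleton, Int.natCast_dvd_ofNat]
    exact hn.not_dvd_one
  · rw [coeff_truncBinomial, Ideal.mem_span_singleton]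
    split_ifs with hik
    · exact Int.natCast_dvd_natCast.mpr (hn.dvd_choose_self hi (by omega))
    · exact dvd_zero _
  · rw [leadingCoeff, hdeg, coeff_truncBinomial, if_pos le_rfl, Ideal.span_singleton_pow,
      Ideal.mem_span_singleton]
    exact_mod_cast hn.not_sq_dvd_choose hkn

end Polynomial

open Polynomial in
theorem irreducible_truncated_binomial_of_prime (n : ℕ) (hn : n.Prime) (k : ℕ) (hk : 1 ≤ k)
    (hkn : k ≤ n - 1) :
    Irreducible (∑ j ∈ Finset.range (k + 1), C ((n.choose j : ℚ)) * X ^ j) := by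
  have hZ := irreducible_truncBinomial_int hn (by omega) (by omega : k < n)
  rw [IsPrimitive.Int.irreducible_iff_irreducible_map_cast (isPrimitive_truncBinomial n k),
    map_truncBinomial] at hZ
  exact hZ
end

section
/- Let k ≥ 1 and let p, q be two distinct primes with (k+1)/2 < p, q ≤ k+1. Then the polynomial g(x) = ∑_{j=0}^{k} x^j/(j+1), cleared of denominators (i.e., lcm(1,…,k+1) · g(x)), is irreducible over ℚ. Equivalently, the polynomial 1/1 + x/2 + x²/3 + ⋯ + x^k/(k+1) is irreducible over ℚ. -/
/-!
For a prime `p` with `(k + 1) / 2 < p ≤ k + 1`, the coefficient `1 / (j + 1)` has `p`-adic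
valuation `-1` at `j = p - 1` and `0` at every other `j ≤ k`. So the `p`-adic Newton polygon of
`∑ xʲ / (j + 1)` has the two edges `(0, 0) — (p - 1, -1)` and `(p - 1, -1) — (k, 0)`, of slopes
`-1 / (p - 1)` and `1 / (k + 1 - p)` in lowest terms, hence without interior lattice points.
The Newton polygon of a product is the Minkowski sum of those of the factors, so every factor
has degree `0`, `p - 1`, `k + 1 - p` or `k`. A proper factor would then have degree in
`{p - 1, k + 1 - p} ∩ {q - 1, k + 1 - q}`, forcing `p + q = k + 2`, which is impossible for
distinct `p, q > (k + 1) / 2`.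

Each edge is handled through the weights `|aᵢ|ₚ ^ b * p ^ (c * i)` of the matching slope: the
first and last indices where the weight of a product is maximal are the sums of those of the
factors.
-/

open Finset

theorem Nat.eq_zero_or_eq_of_dvd_of_le {b n : ℕ} (h : b ∣ n) (hn : n ≤ b) : n = 0 ∨ n = b :=
  (Nat.eq_zero_or_pos n).imp_right fun hpos ↦ le_antisymm hn (Nat.le_of_dvd hpos h)

namespace Polynomial

section TiltedWeight

variable (p b : ℕ) (c : ℤ)

/-- This weight is `p ^ (c * i - b * v_p(aᵢ))`, so its maximisers are the endpoints of the edge of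
slope `c / b` of the `p`-adic Newton polygon of `f` (a single vertex if there is no such edge). -/
noncomputable def tiltedWeight (f : ℚ[X]) (i : ℕ) : ℚ :=
  padicNorm p (f.coeff i) ^ b * (p : ℚ) ^ (c * i)

-- Beyond `natDegree` the weight is `0` only when `0 < b`, which is why most lemmas assume it.
noncomputable def tiltedNorm (f : ℚ[X]) : ℚ :=
  (range (f.natDegree + 1)).sup' nonempty_range_add_one (tiltedWeight p b c f)

theorem exists_tiltedWeight_eq_tiltedNorm (f : ℚ[X]) :
    ∃ i, i ≤ f.natDegree ∧ tiltedWeight p b c f i = tiltedNorm p b c f := by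
  obtain ⟨i, hi, h⟩ := exists_mem_eq_sup' nonempty_range_add_one (tiltedWeight p b c f)
  exact ⟨i, Nat.lt_succ_iff.mp (mem_range.mp hi), h.symm⟩

noncomputable def firstTiltedMax (f : ℚ[X]) : ℕ :=
  Nat.find ((exists_tiltedWeight_eq_tiltedNorm p b c f).imp fun _ ↦ And.right)

noncomputable def lastTiltedMax (f : ℚ[X]) : ℕ :=
  Nat.findGreatest (fun i ↦ tiltedWeight p b c f i = tiltedNorm p b c f) f.natDegree

variable {p b c} {f g h : ℚ[X]} {i j : ℕ} {W : ℚ}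

theorem tiltedWeight_eq_zero (hb : 0 < b) (hi : f.coeff i = 0) :
    tiltedWeight p b c f i = 0 := by
  simp [tiltedWeight, hi, hb.ne']

theorem tiltedWeight_firstTiltedMax (f : ℚ[X]) :
    tiltedWeight p b c f (firstTiltedMax p b c f) = tiltedNorm p b c f :=
  Nat.find_spec ((exists_tiltedWeight_eq_tiltedNorm p b c f).imp fun _ ↦ And.right)

theorem tiltedWeight_lastTiltedMax (f : ℚ[X]) :
    tiltedWeight p b c f (lastTiltedMax p b c f) = tiltedNorm p b c f := by
  obtain ⟨i, hi, heq⟩ := exists_tiltedWeight_eq_tiltedNorm p b c f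
  exact Nat.findGreatest_spec (P := fun i ↦ tiltedWeight p b c f i = tiltedNorm p b c f) hi heq

theorem firstTiltedMax_le_lastTiltedMax (f : ℚ[X]) :
    firstTiltedMax p b c f ≤ lastTiltedMax p b c f := by
  obtain ⟨i, hi, heq⟩ := exists_tiltedWeight_eq_tiltedNorm p b c f
  exact Nat.le_findGreatest ((Nat.find_min' _ heq).trans hi) (tiltedWeight_firstTiltedMax f)

theorem lastTiltedMax_le_natDegree (f : ℚ[X]) : lastTiltedMax p b c f ≤ f.natDegree :=
  Nat.findGreatest_le _

theorem tiltedWeight_nonneg (f : ℚ[X]) (i : ℕ) : 0 ≤ tiltedWeight p b c f i :=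
  mul_nonneg (pow_nonneg (padicNorm.nonneg _) _) (zpow_nonneg (Nat.cast_nonneg _) _)

theorem coeff_ne_zero_of_tiltedWeight_pos (hb : 0 < b) (hi : 0 < tiltedWeight p b c f i) :
    f.coeff i ≠ 0 :=
  fun h0 ↦ hi.ne' (tiltedWeight_eq_zero hb h0)

theorem tiltedWeight_le_tiltedNorm (hb : 0 < b) (f : ℚ[X]) (i : ℕ) :
    tiltedWeight p b c f i ≤ tiltedNorm p b c f := by
  rcases le_or_gt i f.natDegree with hi | hi
  · exact le_sup' (tiltedWeight p b c f) (mem_range_succ_iff.mpr hi)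
  · rw [tiltedWeight_eq_zero hb (coeff_eq_zero_of_natDegree_lt hi)]
    obtain ⟨j, -, hj⟩ := exists_tiltedWeight_eq_tiltedNorm p b c f
    exact hj ▸ tiltedWeight_nonneg f j

theorem tiltedNorm_eq_of_forall_le (hb : 0 < b) (hle : ∀ i, tiltedWeight p b c f i ≤ W)
    (heq : tiltedWeight p b c f i = W) : tiltedNorm p b c f = W :=
  le_antisymm (sup'_le _ _ fun j _ ↦ hle j) (heq ▸ tiltedWeight_le_tiltedNorm hb f i)

theorem tiltedWeight_lt_of_lt_firstTiltedMax (hb : 0 < b) (hi : i < firstTiltedMax p b c f) :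
    tiltedWeight p b c f i < tiltedNorm p b c f :=
  (tiltedWeight_le_tiltedNorm hb f i).lt_of_ne (Nat.find_min _ hi)

theorem firstTiltedMax_eq_of_forall_le (hb : 0 < b) (hle : ∀ i, tiltedWeight p b c f i ≤ W)
    (heq : tiltedWeight p b c f i = W) (hlt : ∀ j < i, tiltedWeight p b c f j < W) :
    firstTiltedMax p b c f = i := by
  have hW := tiltedNorm_eq_of_forall_le hb hle heq
  rw [firstTiltedMax, Nat.find_eq_iff]
  exact ⟨hW ▸ heq, fun j hj ↦ hW ▸ (hlt j hj).ne⟩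

variable [Fact p.Prime]

theorem tiltedWeight_pos (hi : f.coeff i ≠ 0) : 0 < tiltedWeight p b c f i :=
  mul_pos (pow_pos ((padicNorm.nonneg _).lt_of_ne (padicNorm.nonzero hi).symm) _)
    (zpow_pos (Nat.cast_pos.mpr (Fact.out : p.Prime).pos) _)

theorem tiltedWeight_eq_zpow (hi : f.coeff i ≠ 0) :
    tiltedWeight p b c f i = (p : ℚ) ^ (c * i - b * padicValRat p (f.coeff i)) := by
  have hp : (p : ℚ) ≠ 0 := Nat.cast_ne_zero.mpr (Fact.out : p.Prime).ne_zero
  rw [tiltedWeight, padicNorm.eq_zpow_of_nonzero hi, ← zpow_natCast, ← zpow_mul,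
    ← zpow_add₀ hp]
  ring_nf

theorem tiltedNorm_pos (hf : f ≠ 0) : 0 < tiltedNorm p b c f :=
  (tiltedWeight_pos (mt leadingCoeff_eq_zero.mp hf)).trans_le
    (le_sup' (tiltedWeight p b c f) (self_mem_range_succ _))

theorem tiltedWeight_lt_of_lastTiltedMax_lt (hb : 0 < b) (hf : f ≠ 0)
    (hi : lastTiltedMax p b c f < i) : tiltedWeight p b c f i < tiltedNorm p b c f := by
  rcases le_or_gt i f.natDegree with hdeg | hdeg
  · exact (tiltedWeight_le_tiltedNorm hb f i).lt_of_ne (Nat.findGreatest_is_greatest hi hdeg)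
  · rw [tiltedWeight_eq_zero hb (coeff_eq_zero_of_natDegree_lt hdeg)]
    exact tiltedNorm_pos hf

theorem lastTiltedMax_eq_of_forall_le (hb : 0 < b) (hf : f ≠ 0)
    (hle : ∀ i, tiltedWeight p b c f i ≤ W) (heq : tiltedWeight p b c f i = W)
    (hlt : ∀ j, i < j → tiltedWeight p b c f j < W) : lastTiltedMax p b c f = i := by
  have hW := tiltedNorm_eq_of_forall_le hb hle heq
  have hi : f.coeff i ≠ 0 :=
    coeff_ne_zero_of_tiltedWeight_pos hb (heq ▸ hW ▸ tiltedNorm_pos hf)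
  rw [lastTiltedMax, Nat.findGreatest_eq_iff]
  exact ⟨le_natDegree_of_ne_zero hi, fun _ ↦ hW ▸ heq,
    fun j hj _ ↦ hW ▸ (hlt j hj).ne⟩

theorem tiltedWeight_mul_tiltedWeight (g h : ℚ[X]) (i j : ℕ) :
    tiltedWeight p b c g i * tiltedWeight p b c h j =
      padicNorm p (g.coeff i * h.coeff j) ^ b * (p : ℚ) ^ (c * ↑(i + j)) := by
  have hp : (p : ℚ) ≠ 0 := Nat.cast_ne_zero.mpr (Fact.out : p.Prime).ne_zero
  rw [tiltedWeight, tiltedWeight, padicNorm.mul, mul_pow, Nat.cast_add, mul_add, zpow_add₀ hp]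
  ring

theorem exists_tiltedWeight_mul_le (g h : ℚ[X]) (K : ℕ) :
    ∃ i j, i + j = K ∧
      tiltedWeight p b c (g * h) K ≤ tiltedWeight p b c g i * tiltedWeight p b c h j := by
  obtain ⟨⟨i, j⟩, hij, hmax⟩ := exists_max_image (antidiagonal K)
    (fun x ↦ padicNorm p (g.coeff x.1 * h.coeff x.2)) ⟨(0, K), by simp⟩
  refine ⟨i, j, mem_antidiagonal.mp hij, ?_⟩
  rw [tiltedWeight_mul_tiltedWeight, mem_antidiagonal.mp hij, tiltedWeight, coeff_mul]
  gcongr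
  exacts [padicNorm.nonneg _, padicNorm.sum_le' (fun x hx ↦ hmax x hx) (padicNorm.nonneg _)]

theorem tiltedWeight_mul_eq {i₀ j₀ : ℕ}
    (hlt : ∀ i j, i + j = i₀ + j₀ → i ≠ i₀ → tiltedWeight p b c g i * tiltedWeight p b c h j <
      tiltedWeight p b c g i₀ * tiltedWeight p b c h j₀) :
    tiltedWeight p b c (g * h) (i₀ + j₀) = tiltedWeight p b c g i₀ * tiltedWeight p b c h j₀ := by
  have hmem : (i₀, j₀) ∈ antidiagonal (i₀ + j₀) := mem_antidiagonal.mpr rfl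
  have hterm : ∀ x ∈ (antidiagonal (i₀ + j₀)).erase (i₀, j₀),
      padicNorm p (g.coeff x.1 * h.coeff x.2) < padicNorm p (g.coeff i₀ * h.coeff j₀) := by
    rintro ⟨i, j⟩ hx
    obtain ⟨hne, hx⟩ := mem_erase.mp hx
    have hij : i + j = i₀ + j₀ := mem_antidiagonal.mp hx
    have h := hlt i j hij fun hi ↦ hne (by ext <;> simp <;> omega)
    rw [tiltedWeight_mul_tiltedWeight, tiltedWeight_mul_tiltedWeight, hij] at h
    exact lt_of_pow_lt_pow_left₀ b (padicNorm.nonneg _)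
      (lt_of_mul_lt_mul_right h (zpow_nonneg (Nat.cast_nonneg _) _))
  rw [tiltedWeight_mul_tiltedWeight, tiltedWeight, coeff_mul, ← add_sum_erase _ _ hmem]
  obtain he | ⟨x, hx⟩ := ((antidiagonal (i₀ + j₀)).erase (i₀, j₀)).eq_empty_or_nonempty
  · rw [he, sum_empty, add_zero]
  have hrest := padicNorm.sum_lt' hterm ((padicNorm.nonneg _).trans_lt (hterm x hx))
  rw [padicNorm.add_eq_max_of_ne hrest.ne', max_eq_left hrest.le]

theorem tiltedWeight_mul_tiltedWeight_lt (hb : 0 < b) (hg : g ≠ 0) (hh : h ≠ 0)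
    (hlt : tiltedWeight p b c g i < tiltedNorm p b c g ∨
      tiltedWeight p b c h j < tiltedNorm p b c h) :
    tiltedWeight p b c g i * tiltedWeight p b c h j <
      tiltedNorm p b c g * tiltedNorm p b c h := by
  rcases hlt with hlt | hlt
  · exact mul_lt_mul_of_nonneg_of_pos hlt (tiltedWeight_le_tiltedNorm hb h j)
      (tiltedWeight_nonneg g i) (tiltedNorm_pos hh)
  · exact mul_lt_mul_of_nonneg_of_pos' (tiltedWeight_le_tiltedNorm hb g i) hlt
      (tiltedWeight_nonneg h j) (tiltedNorm_pos hg)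

theorem tiltedWeight_mul_le_tiltedNorm_mul (hb : 0 < b) (g h : ℚ[X]) (K : ℕ) :
    tiltedWeight p b c (g * h) K ≤ tiltedNorm p b c g * tiltedNorm p b c h := by
  obtain ⟨i, j, -, hle⟩ := exists_tiltedWeight_mul_le (p := p) (b := b) (c := c) g h K
  exact hle.trans (mul_le_mul (tiltedWeight_le_tiltedNorm hb g i)
    (tiltedWeight_le_tiltedNorm hb h j) (tiltedWeight_nonneg h j)
    ((tiltedWeight_nonneg g i).trans (tiltedWeight_le_tiltedNorm hb g i)))

theorem tiltedWeight_mul_lt_tiltedNorm_mul (hb : 0 < b) (hg : g ≠ 0) (hh : h ≠ 0)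
    {K : ℕ} (hlt : ∀ i j, i + j = K → tiltedWeight p b c g i < tiltedNorm p b c g ∨
      tiltedWeight p b c h j < tiltedNorm p b c h) :
    tiltedWeight p b c (g * h) K < tiltedNorm p b c g * tiltedNorm p b c h := by
  obtain ⟨i, j, hij, hle⟩ := exists_tiltedWeight_mul_le (p := p) (b := b) (c := c) g h K
  exact hle.trans_lt (tiltedWeight_mul_tiltedWeight_lt hb hg hh (hlt i j hij))

theorem tiltedWeight_mul_eq_tiltedNorm_mul (hb : 0 < b) (hg : g ≠ 0) (hh : h ≠ 0)
    {i₀ j₀ : ℕ} (hi₀ : tiltedWeight p b c g i₀ = tiltedNorm p b c g)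
    (hj₀ : tiltedWeight p b c h j₀ = tiltedNorm p b c h)
    (hlt : ∀ i j, i + j = i₀ + j₀ → i ≠ i₀ → tiltedWeight p b c g i < tiltedNorm p b c g ∨
      tiltedWeight p b c h j < tiltedNorm p b c h) :
    tiltedWeight p b c (g * h) (i₀ + j₀) = tiltedNorm p b c g * tiltedNorm p b c h := by
  rw [← hi₀, ← hj₀]
  refine tiltedWeight_mul_eq fun i j hij hi ↦ ?_
  rw [hi₀, hj₀]
  exact tiltedWeight_mul_tiltedWeight_lt hb hg hh (hlt i j hij hi)

theorem firstTiltedMax_mul (hb : 0 < b) (hg : g ≠ 0) (hh : h ≠ 0) :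
    firstTiltedMax p b c (g * h) = firstTiltedMax p b c g + firstTiltedMax p b c h := by
  have hlt : ∀ i j, i < firstTiltedMax p b c g ∨ j < firstTiltedMax p b c h →
      tiltedWeight p b c g i < tiltedNorm p b c g ∨
        tiltedWeight p b c h j < tiltedNorm p b c h := fun _ _ ↦
    Or.imp (tiltedWeight_lt_of_lt_firstTiltedMax hb) (tiltedWeight_lt_of_lt_firstTiltedMax hb)
  exact firstTiltedMax_eq_of_forall_le hb (tiltedWeight_mul_le_tiltedNorm_mul hb g h)
    (tiltedWeight_mul_eq_tiltedNorm_mul hb hg hh (tiltedWeight_firstTiltedMax g)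
      (tiltedWeight_firstTiltedMax h) fun i j _ _ ↦ hlt i j (by omega))
    fun _ _ ↦ tiltedWeight_mul_lt_tiltedNorm_mul hb hg hh fun i j _ ↦ hlt i j (by omega)

theorem lastTiltedMax_mul (hb : 0 < b) (hg : g ≠ 0) (hh : h ≠ 0) :
    lastTiltedMax p b c (g * h) = lastTiltedMax p b c g + lastTiltedMax p b c h := by
  have hlt : ∀ i j, lastTiltedMax p b c g < i ∨ lastTiltedMax p b c h < j →
      tiltedWeight p b c g i < tiltedNorm p b c g ∨
        tiltedWeight p b c h j < tiltedNorm p b c h := fun _ _ ↦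
    Or.imp (tiltedWeight_lt_of_lastTiltedMax_lt hb hg) (tiltedWeight_lt_of_lastTiltedMax_lt hb hh)
  exact lastTiltedMax_eq_of_forall_le hb (mul_ne_zero hg hh)
    (tiltedWeight_mul_le_tiltedNorm_mul hb g h)
    (tiltedWeight_mul_eq_tiltedNorm_mul hb hg hh (tiltedWeight_lastTiltedMax g)
      (tiltedWeight_lastTiltedMax h) fun i j _ _ ↦ hlt i j (by omega))
    fun _ _ ↦ tiltedWeight_mul_lt_tiltedNorm_mul hb hg hh fun i j _ ↦ hlt i j (by omega)

theorem coeff_ne_zero_of_tiltedWeight_eq_tiltedNorm (hb : 0 < b) (hf : f ≠ 0)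
    (hi : tiltedWeight p b c f i = tiltedNorm p b c f) : f.coeff i ≠ 0 :=
  coeff_ne_zero_of_tiltedWeight_pos hb (hi ▸ tiltedNorm_pos hf)

theorem dvd_lastTiltedMax_sub_firstTiltedMax (hb : 0 < b) (hf : f ≠ 0)
    (hbc : IsCoprime (b : ℤ) c) : b ∣ lastTiltedMax p b c f - firstTiltedMax p b c f := by
  have hp : (1 : ℚ) < p := Nat.one_lt_cast.mpr (Fact.out : p.Prime).one_lt
  have hfirst := tiltedWeight_firstTiltedMax (p := p) (b := b) (c := c) f
  have hlast := tiltedWeight_lastTiltedMax (p := p) (b := b) (c := c) f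
  have hexp := hfirst.trans hlast.symm
  rw [tiltedWeight_eq_zpow (coeff_ne_zero_of_tiltedWeight_eq_tiltedNorm hb hf hfirst),
    tiltedWeight_eq_zpow (coeff_ne_zero_of_tiltedWeight_eq_tiltedNorm hb hf hlast),
    zpow_right_inj₀ (by positivity) hp.ne'] at hexp
  have hdvd : (b : ℤ) ∣ ((lastTiltedMax p b c f - firstTiltedMax p b c f : ℕ) : ℤ) * c := by
    rw [Nat.cast_sub (firstTiltedMax_le_lastTiltedMax f)]
    exact ⟨padicValRat p (f.coeff (lastTiltedMax p b c f)) -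
      padicValRat p (f.coeff (firstTiltedMax p b c f)), by linarith⟩
  exact Int.natCast_dvd_natCast.mp (hbc.dvd_of_dvd_mul_right hdvd)

-- Edges of a Newton polygon come in order of increasing slope.
theorem lastTiltedMax_le_firstTiltedMax {b₁ b₂ : ℕ} {c₁ c₂ : ℤ} (hb₁ : 0 < b₁)
    (hb₂ : 0 < b₂) (hf : f ≠ 0) (hslope : c₁ * b₂ < c₂ * b₁) :
    lastTiltedMax p b₁ c₁ f ≤ firstTiltedMax p b₂ c₂ f := by
  have hp : (1 : ℚ) < p := Nat.one_lt_cast.mpr (Fact.out : p.Prime).one_lt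
  set i := lastTiltedMax p b₁ c₁ f
  set j := firstTiltedMax p b₂ c₂ f
  by_contra! hji
  have hi := tiltedWeight_lastTiltedMax (p := p) (b := b₁) (c := c₁) f
  have hj := tiltedWeight_firstTiltedMax (p := p) (b := b₂) (c := c₂) f
  have h₁ := hi ▸ tiltedWeight_le_tiltedNorm (c := c₁) hb₁ f j
  have h₂ := hj ▸ tiltedWeight_le_tiltedNorm (c := c₂) hb₂ f i
  rw [tiltedWeight_eq_zpow (coeff_ne_zero_of_tiltedWeight_eq_tiltedNorm hb₁ hf hi),
    tiltedWeight_eq_zpow (coeff_ne_zero_of_tiltedWeight_eq_tiltedNorm hb₂ hf hj),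
    zpow_le_zpow_iff_right₀ hp] at h₁ h₂
  have hji' : (j : ℤ) < i := by exact_mod_cast hji
  nlinarith [mul_le_mul_of_nonneg_left h₁ (Int.natCast_nonneg b₂),
    mul_le_mul_of_nonneg_left h₂ (Int.natCast_nonneg b₁),
    mul_pos (sub_pos.mpr hslope) (sub_pos.mpr hji')]

end TiltedWeight

noncomputable def harmonicTruncation (k : ℕ) : ℚ[X] :=
  ∑ j ∈ range (k + 1), C ((1 : ℚ) / (j + 1)) * X ^ j

variable {k : ℕ}

theorem coeff_harmonicTruncation (k j : ℕ) :
    (harmonicTruncation k).coeff j = if j ≤ k then ((j : ℚ) + 1)⁻¹ else 0 := by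
  simp [harmonicTruncation]

theorem coeff_harmonicTruncation_ne_zero {j : ℕ} (hj : j ≤ k) :
    (harmonicTruncation k).coeff j ≠ 0 := by
  rw [coeff_harmonicTruncation, if_pos hj]
  positivity

theorem natDegree_harmonicTruncation (k : ℕ) : (harmonicTruncation k).natDegree = k :=
  natDegree_eq_of_le_of_coeff_ne_zero
    (natDegree_le_iff_coeff_eq_zero.mpr fun j hj ↦ by
      simp [coeff_harmonicTruncation, not_le.mpr hj])
    (coeff_harmonicTruncation_ne_zero le_rfl)

theorem harmonicTruncation_ne_zero (k : ℕ) : harmonicTruncation k ≠ 0 :=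
  fun h ↦ coeff_harmonicTruncation_ne_zero (Nat.zero_le k) (by rw [h, coeff_zero])

variable {p : ℕ} [Fact p.Prime]

theorem padicValRat_coeff_harmonicTruncation (hkp : k + 1 < 2 * p) {j : ℕ} (hj : j ≤ k) :
    padicValRat p ((harmonicTruncation k).coeff j) = if j + 1 = p then -1 else 0 := by
  have hcast : (j : ℚ) + 1 = ((j + 1 : ℕ) : ℚ) := by push_cast; rfl
  rw [coeff_harmonicTruncation, if_pos hj, hcast, padicValRat.inv, padicValRat.of_nat]
  split_ifs with hjp
  · simp [hjp]
  · have hndvd : ¬ p ∣ j + 1 := by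
      rintro ⟨m, hm⟩
      rcases m with _ | _ | m
      · omega
      · exact hjp (by simpa using hm)
      · nlinarith
    simp [padicValNat.eq_zero_of_not_dvd hndvd]

theorem tiltedWeight_harmonicTruncation (hkp : k + 1 < 2 * p) {b : ℕ} (hb : 0 < b) (c : ℤ)
    (j : ℕ) : tiltedWeight p b c (harmonicTruncation k) j =
      if j ≤ k then (p : ℚ) ^ (c * j + if j + 1 = p then (b : ℤ) else 0) else 0 := by
  by_cases hj : j ≤ k
  · rw [if_pos hj, tiltedWeight_eq_zpow (coeff_harmonicTruncation_ne_zero hj),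
      padicValRat_coeff_harmonicTruncation hkp hj]
    split_ifs <;> ring_nf
  · rw [if_neg hj]
    exact tiltedWeight_eq_zero hb (by simp [coeff_harmonicTruncation, hj])

theorem tiltedMax_harmonicTruncation (hkp : k + 1 < 2 * p) {b : ℕ} (hb : 0 < b) (c M : ℤ)
    {i₀ i₁ : ℕ} (hi : i₀ ≤ i₁) (hi₁ : i₁ ≤ k)
    (hexp : ∀ j ≤ k, c * j + (if j + 1 = p then (b : ℤ) else 0) ≤ M ∧
      (c * j + (if j + 1 = p then (b : ℤ) else 0) = M ↔ j = i₀ ∨ j = i₁)) :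
    firstTiltedMax p b c (harmonicTruncation k) = i₀ ∧
      lastTiltedMax p b c (harmonicTruncation k) = i₁ := by
  have hP : (1 : ℚ) < p := Nat.one_lt_cast.mpr (Fact.out : p.Prime).one_lt
  have hw := tiltedWeight_harmonicTruncation hkp hb c
  have hlt : ∀ j, j ≠ i₀ → j ≠ i₁ → tiltedWeight p b c (harmonicTruncation k) j < (p : ℚ) ^ M := by
    intro j h₀ h₁
    rcases le_or_gt j k with hj | hj
    · rw [hw, if_pos hj, zpow_lt_zpow_iff_right₀ hP]
      exact (hexp j hj).1.lt_of_ne fun h ↦ ((hexp j hj).2.mp h).elim h₀ h₁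
    · rw [hw, if_neg hj.not_ge]
      positivity
  have heq : ∀ j, j = i₀ ∨ j = i₁ → tiltedWeight p b c (harmonicTruncation k) j = (p : ℚ) ^ M := by
    intro j hj
    rw [hw, if_pos (by omega), (hexp j (by omega)).2.mpr hj]
  have hle : ∀ j, tiltedWeight p b c (harmonicTruncation k) j ≤ (p : ℚ) ^ M := fun j ↦
    if h : j = i₀ ∨ j = i₁ then (heq j h).le else (hlt j (by tauto) (by tauto)).le
  exact ⟨firstTiltedMax_eq_of_forall_le hb hle (heq i₀ (.inl rfl))
      fun j hj ↦ hlt j hj.ne (by omega),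
    lastTiltedMax_eq_of_forall_le hb (harmonicTruncation_ne_zero k) hle (heq i₁ (.inr rfl))
      fun j hj ↦ hlt j (by omega) hj.ne'⟩

theorem tiltedMax_harmonicTruncation_descending (hkp : k + 1 < 2 * p) (hpk : p ≤ k + 1) :
    firstTiltedMax p (p - 1) (-1) (harmonicTruncation k) = 0 ∧
      lastTiltedMax p (p - 1) (-1) (harmonicTruncation k) = p - 1 := by
  have hp := (Fact.out : p.Prime).two_le
  exact tiltedMax_harmonicTruncation hkp (by omega) (-1) 0 (Nat.zero_le _) (by omega)
    fun j hj ↦ by split_ifs <;> omega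

theorem tiltedMax_harmonicTruncation_ascending (hkp : k + 1 < 2 * p) (hpk : p ≤ k) :
    firstTiltedMax p (k + 1 - p) 1 (harmonicTruncation k) = p - 1 ∧
      lastTiltedMax p (k + 1 - p) 1 (harmonicTruncation k) = k := by
  have hp := (Fact.out : p.Prime).two_le
  exact tiltedMax_harmonicTruncation hkp (by omega) 1 k (by omega) le_rfl
    fun j hj ↦ by split_ifs <;> omega

theorem natDegree_factor_harmonicTruncation (hkp : k + 1 < 2 * p) (hpk : p ≤ k + 1)
    {g h : ℚ[X]} (hgh : g * h = harmonicTruncation k) :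
    g.natDegree = 0 ∨ g.natDegree = p - 1 ∨ g.natDegree = k + 1 - p ∨ g.natDegree = k := by
  have hp := (Fact.out : p.Prime).two_le
  have hgh0 : g * h ≠ 0 := hgh ▸ harmonicTruncation_ne_zero k
  have hg := left_ne_zero_of_mul hgh0
  have hh := right_ne_zero_of_mul hgh0
  have hdeg : g.natDegree + h.natDegree = k := by
    rw [← natDegree_mul hg hh, hgh, natDegree_harmonicTruncation]
  have hb₁ : 0 < p - 1 := by omega
  have hfirst₁ := firstTiltedMax_mul (p := p) (c := -1) hb₁ hg hh
  have hlast₁ := lastTiltedMax_mul (p := p) (c := -1) hb₁ hg hh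
  obtain ⟨hfirstF₁, hlastF₁⟩ := tiltedMax_harmonicTruncation_descending hkp hpk
  rw [hgh, hfirstF₁] at hfirst₁
  rw [hgh, hlastF₁] at hlast₁
  have hspan₁ := Nat.eq_zero_or_eq_of_dvd_of_le
    (dvd_lastTiltedMax_sub_firstTiltedMax (p := p) hb₁ hg isCoprime_one_right.neg_right) (by omega)
  have hlast_g₁ := lastTiltedMax_le_natDegree (p := p) (b := p - 1) (c := -1) g
  have hlast_h₁ := lastTiltedMax_le_natDegree (p := p) (b := p - 1) (c := -1) h
  -- for `p = k + 1` the descending edge is the whole Newton polygon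
  rcases hpk.eq_or_lt with hpk | hpk
  · omega
  have hb₂ : 0 < k + 1 - p := by omega
  have hfirst₂ := firstTiltedMax_mul (p := p) (c := 1) hb₂ hg hh
  have hlast₂ := lastTiltedMax_mul (p := p) (c := 1) hb₂ hg hh
  obtain ⟨hfirstF₂, hlastF₂⟩ := tiltedMax_harmonicTruncation_ascending hkp (by omega)
  rw [hgh, hfirstF₂] at hfirst₂
  rw [hgh, hlastF₂] at hlast₂
  have hslope : -1 * ((k + 1 - p : ℕ) : ℤ) < 1 * ((p - 1 : ℕ) : ℤ) := by omega
  have hedge_g := lastTiltedMax_le_firstTiltedMax (p := p) hb₁ hb₂ hg hslope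
  have hedge_h := lastTiltedMax_le_firstTiltedMax (p := p) hb₁ hb₂ hh hslope
  have hspan_h₂ := firstTiltedMax_le_lastTiltedMax (p := p) (b := k + 1 - p) (c := 1) h
  have hlast_g₂ := lastTiltedMax_le_natDegree (p := p) (b := k + 1 - p) (c := 1) g
  have hlast_h₂ := lastTiltedMax_le_natDegree (p := p) (b := k + 1 - p) (c := 1) h
  have hspan₂ := Nat.eq_zero_or_eq_of_dvd_of_le
    (dvd_lastTiltedMax_sub_firstTiltedMax (p := p) hb₂ hg isCoprime_one_right) (by omega)
  omega

end Polynomial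

open Polynomial in
theorem irreducible_harmonic_truncation_general (k : ℕ) (p q : ℕ) (hp : p.Prime)
    (hq : q.Prime) (hpq : p ≠ q) (hp1 : k + 1 < 2 * p) (hp2 : p ≤ k + 1)
    (hq1 : k + 1 < 2 * q) (hq2 : q ≤ k + 1) :
    Irreducible (∑ j ∈ Finset.range (k + 1), C ((1 : ℚ) / (j + 1)) * X ^ j) := by
  have : Fact p.Prime := ⟨hp⟩
  have : Fact q.Prime := ⟨hq⟩
  have := hp.two_le
  have := hq.two_le
  change Irreducible (harmonicTruncation k)
  refine ⟨fun hu ↦ ?_, fun g h hgh ↦ ?_⟩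
  · have := natDegree_eq_zero_of_isUnit hu
    rw [natDegree_harmonicTruncation] at this
    omega
  have hgh0 : g * h ≠ 0 := hgh ▸ harmonicTruncation_ne_zero k
  have hdeg : g.natDegree + h.natDegree = k := by
    rw [← natDegree_mul (left_ne_zero_of_mul hgh0) (right_ne_zero_of_mul hgh0), ← hgh,
      natDegree_harmonicTruncation]
  have hdeg_p := natDegree_factor_harmonicTruncation hp1 hp2 hgh.symm
  have hdeg_q := natDegree_factor_harmonicTruncation hq1 hq2 hgh.symm
  rcases (by omega : g.natDegree = 0 ∨ h.natDegree = 0) with h0 | h0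
  · exact .inl (isUnit_iff_degree_eq_zero.mpr
      ((degree_eq_iff_natDegree_eq (left_ne_zero_of_mul hgh0)).mpr h0))
  · exact .inr (isUnit_iff_degree_eq_zero.mpr
      ((degree_eq_iff_natDegree_eq (right_ne_zero_of_mul hgh0)).mpr h0))

open Polynomial in
theorem irreducible_harmonic_truncation (k : ℕ) (hk : 1 ≤ k) (p q : ℕ) (hp : p.Prime)
    (hq : q.Prime) (hpq : p ≠ q) (hp1 : k + 1 < 2 * p) (hp2 : p ≤ k + 1)
    (hq1 : k + 1 < 2 * q) (hq2 : q ≤ k + 1) :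
    Irreducible (∑ j ∈ Finset.range (k + 1), C ((1 : ℚ) / (j + 1)) * X ^ j) :=
  irreducible_harmonic_truncation_general k p q hp hq hpq hp1 hp2 hq1 hq2
end

section
/- Let f(x) = ∑_{j=0}^{k} d_j x^j ∈ ℤ[x] with d_0 d_k ≠ 0, let p be a prime, and suppose the Newton polygon of f with respect to p consists of two segments: one from (0,1) to (u,0) and one from (u,0) to (k,1), where 0 < u < k. Then f is either irreducible over ℚ, or f is the product of an irreducible polynomial of degree u and an irreducible polynomial of degree k-u. -/
/-!
Modulo `p` we have `f ≡ a X^u` with `p ∤ a`. If `g ∣ f` has constant term prime to `p`, its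
reduction divides `X^u` and is prime to `X`, hence is constant; so `p` divides the leading
coefficient of `g` whenever `g` is nonconstant. As `p² ∤ f(0)`, among nonconstant factors
`f = g₁ ⋯ gᵣ` at most one has `p ∣ gᵢ(0)`, and as `p² ∤` the leading coefficient of `f`, at most one
has `p ∣` its leading coefficient. Hence `r ≤ 2`. If `f = g h` with `p ∤ g(0)`, then `h ≡ c X^u`
with `p ∤` the leading coefficient of `h`, so `deg h = u`. Gauss's lemma transports all this from
the primitive part of `f` in `ℤ[X]` to `ℚ[X]`.
-/

open Polynomial

namespace Polynomial

theorem natDegree_eq_zero_of_mul_eq_C_mul_X_pow {D : Type*} [CommRing D] [IsDomain D]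
    {g q : D[X]} {a : D} {n : ℕ} (ha : a ≠ 0) (hg : g.coeff 0 ≠ 0) (h : g * q = C a * X ^ n) :
    g.natDegree = 0 := by
  have hq : q ≠ 0 := by
    rintro rfl
    rw [mul_zero, eq_comm, mul_eq_zero, C_eq_zero] at h
    exact h.elim ha (pow_ne_zero n X_ne_zero)
  have hXq : X ^ n ∣ q :=
    prime_X.pow_dvd_of_dvd_mul_left n (by rwa [X_dvd_iff]) (by rw [h]; exact dvd_mul_left _ _)
  have hg' : g ≠ 0 := by
    rintro rfl
    exact hg (coeff_zero 0)
  have hdeg := natDegree_mul hg' hq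
  rw [h, natDegree_C_mul_X_pow n a ha] at hdeg
  have := natDegree_le_of_dvd hXq hq
  rw [natDegree_X_pow] at this
  omega

section Primitive

variable {R : Type*} [CommRing R] {g : R[X]}

theorem IsPrimitive.isUnit_of_natDegree_eq_zero (hg : g.IsPrimitive) (h : g.natDegree = 0) :
    IsUnit g := by
  rw [eq_C_of_natDegree_eq_zero h] at hg ⊢
  exact isUnit_C.mpr (hg _ dvd_rfl)

theorem IsPrimitive.irreducible_of_forall_natDegree_eq_zero [IsDomain R] (hg : g.IsPrimitive)
    (hdeg : 0 < g.natDegree) (h : ∀ a b, g = a * b → a.natDegree = 0 ∨ b.natDegree = 0) :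
    Irreducible g where
  not_isUnit hu := hdeg.ne' (natDegree_eq_zero_of_isUnit hu)
  isUnit_or_isUnit a b hab := (h a b hab).imp
    (isPrimitive_of_dvd hg (Dvd.intro b hab.symm)).isUnit_of_natDegree_eq_zero
    (isPrimitive_of_dvd hg (Dvd.intro_left a hab.symm)).isUnit_of_natDegree_eq_zero

end Primitive

section TwoSegment

variable {R : Type*} [CommRing R] {P : Ideal R} {u : ℕ} {f g h : R[X]}

/-- For `P = (p)` in `ℤ`, this says that the `p`-adic Newton polygon of `f` consists of the two
segments from `(0, 1)` to `(u, 0)` and from `(u, 0)` to `(f.natDegree, 1)`. -/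
structure IsTwoSegmentAt (f : R[X]) (u : ℕ) (P : Ideal R) : Prop where
  mem : ∀ {n}, n ≠ u → f.coeff n ∈ P
  coeff_notMem : f.coeff u ∉ P
  coeff_zero_notMem : f.coeff 0 ∉ P ^ 2
  leadingCoeff_notMem : f.leadingCoeff ∉ P ^ 2

namespace IsTwoSegmentAt

theorem map_mk_eq (hf : f.IsTwoSegmentAt u P) :
    f.map (Ideal.Quotient.mk P) = C (Ideal.Quotient.mk P (f.coeff u)) * X ^ u := by
  ext n
  rw [coeff_map, coeff_C_mul_X_pow]
  split_ifs with hn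
  · rw [hn]
  · exact Ideal.Quotient.eq_zero_iff_mem.mpr (hf.mem hn)

theorem coeff_zero_notMem_or_of_mul_dvd (hf : f.IsTwoSegmentAt u P) (hgh : g * h ∣ f) :
    g.coeff 0 ∉ P ∨ h.coeff 0 ∉ P := by
  by_contra! hgh0
  obtain ⟨r, rfl⟩ := hgh
  apply hf.coeff_zero_notMem
  rw [mul_coeff_zero, mul_coeff_zero, sq]
  exact (P * P).mul_mem_right _ (Ideal.mul_mem_mul hgh0.1 hgh0.2)

theorem natDegree_map_eq_zero_of_dvd [P.IsPrime] (hf : f.IsTwoSegmentAt u P) (hgf : g ∣ f)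
    (hg0 : g.coeff 0 ∉ P) : (g.map (Ideal.Quotient.mk P)).natDegree = 0 := by
  obtain ⟨q, rfl⟩ := hgf
  refine natDegree_eq_zero_of_mul_eq_C_mul_X_pow (q := q.map _) ?_ ?_ (by
    rw [← Polynomial.map_mul, hf.map_mk_eq])
  · rw [Ne, Ideal.Quotient.eq_zero_iff_mem]
    exact hf.coeff_notMem
  · rwa [coeff_map, Ne, Ideal.Quotient.eq_zero_iff_mem]

theorem leadingCoeff_mem_of_dvd [P.IsPrime] (hf : f.IsTwoSegmentAt u P) (hgf : g ∣ f)
    (hg0 : g.coeff 0 ∉ P) (hg : 0 < g.natDegree) : g.leadingCoeff ∈ P := by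
  by_contra hlc
  have := natDegree_map_of_leadingCoeff_ne_zero (Ideal.Quotient.mk P)
    (by rwa [Ne, Ideal.Quotient.eq_zero_iff_mem])
  rw [hf.natDegree_map_eq_zero_of_dvd hgf hg0] at this
  omega

end IsTwoSegmentAt

variable [IsDomain R]

namespace IsTwoSegmentAt

theorem of_C_mul [hP : P.IsPrime] {c : R} (hf : (C c * f).IsTwoSegmentAt u P) :
    f.IsTwoSegmentAt u P := by
  have hc : c ∉ P := fun hc => hf.coeff_notMem (by rw [coeff_C_mul]; exact P.mul_mem_right _ hc)
  refine ⟨fun hn => ?_, fun h => ?_, fun h => ?_, fun h => ?_⟩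
  · have := hf.mem hn
    rw [coeff_C_mul] at this
    exact (hP.mem_or_mem this).resolve_left hc
  · exact hf.coeff_notMem (by rw [coeff_C_mul]; exact P.mul_mem_left c h)
  · exact hf.coeff_zero_notMem (by rw [coeff_C_mul]; exact (P ^ 2).mul_mem_left c h)
  · exact hf.leadingCoeff_notMem
      (by rw [leadingCoeff_mul, leadingCoeff_C]; exact (P ^ 2).mul_mem_left c h)

theorem natDegree_eq_zero_or_of_mul_dvd [P.IsPrime] (hf : f.IsTwoSegmentAt u P)
    (hgh : g * h ∣ f) (hg0 : g.coeff 0 ∉ P) (hh0 : h.coeff 0 ∉ P) :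
    g.natDegree = 0 ∨ h.natDegree = 0 := by
  by_contra! hdeg
  have hg := hf.leadingCoeff_mem_of_dvd (dvd_of_mul_right_dvd hgh) hg0 hdeg.1.bot_lt
  have hh := hf.leadingCoeff_mem_of_dvd (dvd_of_mul_left_dvd hgh) hh0 hdeg.2.bot_lt
  obtain ⟨r, rfl⟩ := hgh
  apply hf.leadingCoeff_notMem
  rw [leadingCoeff_mul, leadingCoeff_mul, sq]
  exact (P * P).mul_mem_right _ (Ideal.mul_mem_mul hg hh)

theorem natDegree_eq_zero_of_mul_mul_dvd [P.IsPrime] {g₁ g₂ g₃ : R[X]}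
    (hf : f.IsTwoSegmentAt u P) (hg : g₁ * g₂ * g₃ ∣ f) :
    g₁.natDegree = 0 ∨ g₂.natDegree = 0 ∨ g₃.natDegree = 0 := by
  have hg' : g₁ * (g₂ * g₃) ∣ f := by rwa [← mul_assoc]
  have h₁₂ : g₁ * g₂ ∣ f := dvd_of_mul_right_dvd hg
  have h₁₃ : g₁ * g₃ ∣ f := by
    rw [mul_right_comm] at hg
    exact dvd_of_mul_right_dvd hg
  have h₂₃ : g₂ * g₃ ∣ f := dvd_of_mul_left_dvd hg'
  rcases hf.coeff_zero_notMem_or_of_mul_dvd hg' with h₁ | h₂₃0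
  · rcases hf.coeff_zero_notMem_or_of_mul_dvd h₂₃ with h₂ | h₃
    · exact (hf.natDegree_eq_zero_or_of_mul_dvd h₁₂ h₁ h₂).imp_right Or.inl
    · exact (hf.natDegree_eq_zero_or_of_mul_dvd h₁₃ h₁ h₃).imp_right Or.inr
  · rw [mul_coeff_zero] at h₂₃0
    exact Or.inr (hf.natDegree_eq_zero_or_of_mul_dvd h₂₃
      (fun h => h₂₃0 (P.mul_mem_right _ h)) (fun h => h₂₃0 (P.mul_mem_left _ h)))

theorem natDegree_eq_of_eq_mul [P.IsPrime] (hf : f.IsTwoSegmentAt u P) (hfgh : f = g * h)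
    (hg : 0 < g.natDegree) (hg0 : g.coeff 0 ∉ P) : h.natDegree = u := by
  have hgf : g ∣ f := ⟨h, hfgh⟩
  have hlh : Ideal.Quotient.mk P h.leadingCoeff ≠ 0 := by
    rw [Ne, Ideal.Quotient.eq_zero_iff_mem]
    intro hlh
    apply hf.leadingCoeff_notMem
    rw [hfgh, leadingCoeff_mul, sq]
    exact Ideal.mul_mem_mul (hf.leadingCoeff_mem_of_dvd hgf hg0 hg) hlh
  have hg_map : g.map (Ideal.Quotient.mk P) = C (Ideal.Quotient.mk P (g.coeff 0)) := by
    rw [eq_C_of_natDegree_eq_zero (hf.natDegree_map_eq_zero_of_dvd hgf hg0), coeff_map]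
  have hdeg := congrArg natDegree hf.map_mk_eq
  rwa [hfgh, Polynomial.map_mul, hg_map,
    natDegree_C_mul (by rwa [Ne, Ideal.Quotient.eq_zero_iff_mem]),
    natDegree_map_of_leadingCoeff_ne_zero _ hlh, natDegree_C_mul_X_pow _ _ (by
      rw [Ne, Ideal.Quotient.eq_zero_iff_mem, ← hfgh]; exact hf.coeff_notMem)] at hdeg

theorem irreducible_of_eq_mul [P.IsPrime] (hf : f.IsTwoSegmentAt u P) (hprim : f.IsPrimitive)
    (hfgh : f = g * h) (hg : 0 < g.natDegree) (hh : 0 < h.natDegree) :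
    Irreducible g ∧ Irreducible h := by
  refine ⟨(isPrimitive_of_dvd hprim ⟨h, hfgh⟩).irreducible_of_forall_natDegree_eq_zero hg
      fun a b hab => ?_,
    (isPrimitive_of_dvd hprim (Dvd.intro_left g hfgh.symm)).irreducible_of_forall_natDegree_eq_zero
      hh fun a b hab => ?_⟩
  · have := hf.natDegree_eq_zero_of_mul_mul_dvd (g₃ := h) (by rw [← hab, ← hfgh])
    omega
  · have := hf.natDegree_eq_zero_of_mul_mul_dvd (g₁ := g) (by rw [mul_assoc, ← hab, ← hfgh])
    omega

theorem exists_irreducible_factors [P.IsPrime] (hf : f.IsTwoSegmentAt u P) (hu : u ≠ 0)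
    (hprim : f.IsPrimitive) (hirr : ¬ Irreducible f) :
    ∃ g h, f = g * h ∧ Irreducible g ∧ Irreducible h ∧
      g.natDegree = f.natDegree - u ∧ h.natDegree = u := by
  have hfu : ¬ IsUnit f := fun hfu => hf.coeff_notMem <| by
    rw [coeff_eq_zero_of_natDegree_lt (by rw [natDegree_eq_zero_of_isUnit hfu]; omega)]
    exact P.zero_mem
  have hpos : ∀ {g h}, f = g * h → ¬ IsUnit g → 0 < g.natDegree := fun hfgh hg =>
    Nat.pos_of_ne_zero fun hg0 =>
      hg ((isPrimitive_of_dvd hprim ⟨_, hfgh⟩).isUnit_of_natDegree_eq_zero hg0)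
  obtain ⟨g, h, hfgh, hg, hh⟩ : ∃ g h, f = g * h ∧ ¬ IsUnit g ∧ ¬ IsUnit h := by
    simpa [irreducible_iff, hfu] using hirr
  obtain ⟨g, h, hfgh, hg, hh, hg0⟩ : ∃ g h, f = g * h ∧ 0 < g.natDegree ∧ 0 < h.natDegree ∧
      g.coeff 0 ∉ P := by
    rcases hf.coeff_zero_notMem_or_of_mul_dvd hfgh.symm.dvd with hg0 | hh0
    · exact ⟨g, h, hfgh, hpos hfgh hg, hpos (hfgh.trans (mul_comm g h)) hh, hg0⟩
    · exact ⟨h, g, hfgh.trans (mul_comm g h), hpos (hfgh.trans (mul_comm g h)) hh, hpos hfgh hg,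
        hh0⟩
  have hdeg : f.natDegree = g.natDegree + h.natDegree := by
    rw [hfgh, natDegree_mul (ne_zero_of_natDegree_gt hg) (ne_zero_of_natDegree_gt hh)]
  have hhu := hf.natDegree_eq_of_eq_mul hfgh hg hg0
  obtain ⟨hg_irr, hh_irr⟩ := hf.irreducible_of_eq_mul hprim hfgh hg hh
  exact ⟨g, h, hfgh, hg_irr, hh_irr, by omega, hhu⟩

theorem irreducible_map_intCast_or {P : Ideal ℤ} [P.IsPrime] {f : ℤ[X]}
    (hf : f.IsTwoSegmentAt u P) (hu : u ≠ 0) :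
    Irreducible (f.map (Int.castRingHom ℚ)) ∨
      ∃ g h : ℚ[X], Irreducible g ∧ Irreducible h ∧ g.natDegree = u ∧
        h.natDegree = f.natDegree - u ∧ f.map (Int.castRingHom ℚ) = g * h := by
  have hf0 : f ≠ 0 := by
    rintro rfl
    exact hf.coeff_notMem (by rw [coeff_zero]; exact P.zero_mem)
  have hc0 : (f.content : ℚ) ≠ 0 := Int.cast_ne_zero.mpr (content_eq_zero_iff.not.mpr hf0)
  have hc : IsUnit (C (f.content : ℚ)) := isUnit_C.mpr hc0.isUnit
  have hmap : f.map (Int.castRingHom ℚ) =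
      C (f.content : ℚ) * f.primPart.map (Int.castRingHom ℚ) := by
    conv_lhs => rw [f.eq_C_content_mul_primPart]
    rw [Polynomial.map_mul, map_C, eq_intCast]
  have hf₀ : f.primPart.IsTwoSegmentAt u P := by
    rw [f.eq_C_content_mul_primPart] at hf
    exact hf.of_C_mul
  have hprim := f.isPrimitive_primPart
  have gauss : ∀ q, q ∣ f.primPart → Irreducible q → Irreducible (q.map (Int.castRingHom ℚ)) :=
    fun q hq =>
      (IsPrimitive.Int.irreducible_iff_irreducible_map_cast (isPrimitive_of_dvd hprim hq)).mp
  have hdeg : ∀ q : ℤ[X], (q.map (Int.castRingHom ℚ)).natDegree = q.natDegree :=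
    natDegree_map_eq_of_injective (RingHom.injective_int _)
  rw [hmap, irreducible_isUnit_mul hc]
  by_cases hirr : Irreducible f.primPart
  · exact Or.inl (gauss _ dvd_rfl hirr)
  obtain ⟨g, h, hgh, hg, hh, hgdeg, hhdeg⟩ := hf₀.exists_irreducible_factors hu hprim hirr
  refine Or.inr ⟨h.map _, C (f.content : ℚ) * g.map _, gauss h (Dvd.intro_left _ hgh.symm) hh,
    (irreducible_isUnit_mul hc).mpr (gauss g ⟨h, hgh⟩ hg), ?_, ?_, ?_⟩
  · rw [hdeg, hhdeg]
  · rw [natDegree_C_mul hc0, hdeg, hgdeg, natDegree_primPart]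
  · rw [hgh, Polynomial.map_mul]
    ring

end IsTwoSegmentAt

end TwoSegment

end Polynomial

section padicValInt

variable {p : ℕ} [Fact p.Prime]

theorem not_sq_dvd_of_padicValInt_eq_one {a : ℤ} (ha : padicValInt p a = 1) :
    ¬ (p : ℤ) ^ 2 ∣ a := by
  rw [padicValInt_dvd_iff]
  rintro (rfl | h)
  · simp at ha
  · omega

theorem isTwoSegmentAt_of_padicValInt {k u : ℕ} {f : ℤ[X]} (hdeg : f.natDegree = k)
    (hv0 : padicValInt p (f.coeff 0) = 1)
    (hvk : padicValInt p (f.coeff k) = 1)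
    (hvu : f.coeff u ≠ 0 ∧ padicValInt p (f.coeff u) = 0)
    (hlow : ∀ j ≤ u, f.coeff j ≠ 0 → u - j ≤ u * padicValInt p (f.coeff j))
    (hhigh : ∀ j, u ≤ j → j ≤ k → f.coeff j ≠ 0 →
      j - u ≤ (k - u) * padicValInt p (f.coeff j)) :
    f.IsTwoSegmentAt u (Ideal.span {(p : ℤ)}) where
  mem {n} hn := by
    rw [Ideal.mem_span_singleton]
    by_cases hz : f.coeff n = 0
    · rw [hz]
      exact dvd_zero _
    have hnk : n ≤ k := hdeg ▸ le_natDegree_of_ne_zero hz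
    have hv : padicValInt p (f.coeff n) ≠ 0 := by
      intro hv
      rcases le_total n u with h | h
      · have := hlow n h hz
        rw [hv] at this
        omega
      · have := hhigh n h hnk hz
        rw [hv] at this
        omega
    exact (dvd_pow_self _ hv).trans (padicValInt_dvd _)
  coeff_notMem h := by
    rw [Ideal.mem_span_singleton, ← pow_one (p : ℤ), padicValInt_dvd_iff, hvu.2] at h
    omega
  coeff_zero_notMem := by
    rw [Ideal.span_singleton_pow, Ideal.mem_span_singleton]
    exact not_sq_dvd_of_padicValInt_eq_one hv0
  leadingCoeff_notMem := by
    rw [Ideal.span_singleton_pow, Ideal.mem_span_singleton, leadingCoeff, hdeg]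
    exact not_sq_dvd_of_padicValInt_eq_one hvk

end padicValInt

open Polynomial in
theorem newton_polygon_two_segments_general (k u : ℕ) (hu : 0 < u) (p : ℕ)
    (hp : p.Prime) (f : ℤ[X]) (hdeg : f.natDegree = k)
    (hv0 : padicValInt p (f.coeff 0) = 1)
    (hvk : padicValInt p (f.coeff k) = 1)
    (hvu : f.coeff u ≠ 0 ∧ padicValInt p (f.coeff u) = 0)
    (hlow : ∀ j ≤ u, f.coeff j ≠ 0 → u - j ≤ u * padicValInt p (f.coeff j))
    (hhigh : ∀ j, u ≤ j → j ≤ k → f.coeff j ≠ 0 →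
      j - u ≤ (k - u) * padicValInt p (f.coeff j)) :
    Irreducible (f.map (Int.castRingHom ℚ)) ∨
      ∃ g h : ℚ[X], Irreducible g ∧ Irreducible h ∧ g.natDegree = u ∧ h.natDegree = k - u ∧
        f.map (Int.castRingHom ℚ) = g * h := by
  have := Fact.mk hp
  have : (Ideal.span {(p : ℤ)}).IsPrime :=
    (Ideal.span_singleton_prime (by exact_mod_cast hp.ne_zero)).mpr
      (Nat.prime_iff_prime_int.mp hp)
  have hf := isTwoSegmentAt_of_padicValInt hdeg hv0 hvk hvu hlow hhigh
  simpa only [hdeg] using hf.irreducible_map_intCast_or hu.ne'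

open Polynomial in
theorem newton_polygon_two_segments (k u : ℕ) (hu : 0 < u) (huk : u < k) (p : ℕ)
    (hp : p.Prime) (f : ℤ[X]) (hdeg : f.natDegree = k) (h0 : f.coeff 0 ≠ 0)
    (hv0 : padicValInt p (f.coeff 0) = 1)
    (hvk : padicValInt p (f.coeff k) = 1)
    (hvu : f.coeff u ≠ 0 ∧ padicValInt p (f.coeff u) = 0)
    (hlow : ∀ j ≤ u, f.coeff j ≠ 0 → u - j ≤ u * padicValInt p (f.coeff j))
    (hhigh : ∀ j, u ≤ j → j ≤ k → f.coeff j ≠ 0 →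
      j - u ≤ (k - u) * padicValInt p (f.coeff j)) :
    Irreducible (f.map (Int.castRingHom ℚ)) ∨
      ∃ g h : ℚ[X], Irreducible g ∧ Irreducible h ∧ g.natDegree = u ∧ h.natDegree = k - u ∧
        f.map (Int.castRingHom ℚ) = g * h :=
  newton_polygon_two_segments_general k u hu p hp f hdeg hv0 hvk hvu hlow hhigh
end

section
/- Let n, k be positive integers with k ≤ n-1, let p > k be prime, and let e = ν_p(n) > 0 (or e = ν_p(n-k) > 0). Let f(x) = ∑_{j=0}^{k} a_j c_j x^j where c_j = (-1)^{k-j} C(n,j) C(n-j-1,k-j) and each a_j is a nonzero integer all of whose prime factors are ≤ k. Then every irreducible factor of f over ℚ has degree divisible by k/gcd(k,e). -/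
/-!
Write `v = v_p`; the `a_j` are `p`-adic units since `p > k`. Since `p > k`, at most one of any `k`
consecutive integers is divisible by `p`, so if `e = v(n)` then `v(c_0) = 0` and `v(c_j) = e` for
`1 ≤ j ≤ k`, while if `e = v(n - k)` then `v(c_j) = e` for `j < k` and `v(c_k) = 0`. Either way
the `p`-adic Newton polygon of `f` is a single segment of slope `±e/k`. For `c = p^{±e/k}` the
Gauss norm `max_j |f_j|_p c^j` is then attained at both `j = 0` and `j = deg f`, and since this
Gauss norm is multiplicative the same holds for every factor `g`, that is
`|g_0|_p = |lc g|_p c^{deg g}`. Comparing `p`-adic valuations gives `k ∣ e · deg g`.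
-/

open Polynomial Finset

lemma Nat.div_gcd_dvd_of_dvd_mul {k e m : ℕ} (hk : 0 < k) (h : k ∣ e * m) : k / k.gcd e ∣ m := by
  refine (Nat.coprime_div_gcd_div_gcd (Nat.gcd_pos_of_pos_left e hk)).dvd_of_dvd_mul_left ?_
  rw [Nat.div_mul_right_comm (Nat.gcd_dvd_right k e)]
  exact Nat.div_dvd_div (Nat.gcd_dvd_left k e) h

lemma Nat.eq_of_dvd_of_dvd_of_lt_add {p x y : ℕ} (hx : p ∣ x) (hy : p ∣ y) (hxy : x < y + p)
    (hyx : y < x + p) : x = y := by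
  rcases le_total x y with h | h
  · have := Nat.eq_zero_of_dvd_of_lt (Nat.dvd_sub hy hx) (by omega)
    omega
  · have := Nat.eq_zero_of_dvd_of_lt (Nat.dvd_sub hx hy) (by omega)
    omega

section Binomial

variable {p : ℕ} [hp : Fact p.Prime]

lemma padicValNat_choose_eq_sum_of_lt {N j : ℕ} (hjp : j < p) (hjN : j ≤ N) :
    padicValNat p (N.choose j) = ∑ i ∈ range j, padicValNat p (N - i) := by
  have hfact : padicValNat p j.factorial = 0 :=
    padicValNat.eq_zero_of_not_dvd fun h => hjp.not_ge ((hp.out.dvd_factorial).1 h)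
  have h := congrArg (fun m => m.factorization p) (Nat.descFactorial_eq_factorial_mul_choose N j)
  simp only [Nat.descFactorial_eq_prod_range,
    Nat.factorization_prod fun i hi => Nat.sub_ne_zero_of_lt ((mem_range.1 hi).trans_le hjN),
    Nat.factorization_mul (Nat.factorial_ne_zero j) (Nat.choose_pos hjN).ne', Finsupp.coe_add,
    Pi.add_apply, Finset.sum_apply', Nat.factorization_def _ hp.out, hfact, zero_add] at h
  exact h.symm

lemma padicValNat_choose_eq_zero_of_lt {N j : ℕ} (hjp : j < p) (hjN : j ≤ N)
    (h : ∀ i < j, ¬ p ∣ N - i) : padicValNat p (N.choose j) = 0 := by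
  rw [padicValNat_choose_eq_sum_of_lt hjp hjN]
  exact sum_eq_zero fun i hi => padicValNat.eq_zero_of_not_dvd (h i (mem_range.1 hi))

lemma padicValNat_choose_eq_of_dvd_sub {N j i₀ : ℕ} (hjp : j < p) (hjN : j ≤ N) (hi₀ : i₀ < j)
    (hdvd : p ∣ N - i₀) : padicValNat p (N.choose j) = padicValNat p (N - i₀) := by
  rw [padicValNat_choose_eq_sum_of_lt hjp hjN, sum_eq_single_of_mem i₀ (mem_range.2 hi₀)]
  intro i hi hne
  rw [mem_range] at hi
  refine padicValNat.eq_zero_of_not_dvd fun hi_dvd => hne ?_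
  have := Nat.eq_of_dvd_of_dvd_of_lt_add hi_dvd hdvd (by omega) (by omega)
  omega

lemma padicValNat_choose_add_choose_of_dvd {n k j : ℕ} (hkp : k < p) (hkn : k < n)
    (hpn : p ∣ n) (hjk : j ≤ k) :
    padicValNat p (n.choose j) + padicValNat p ((n - j - 1).choose (k - j)) =
      if j = 0 then 0 else padicValNat p n := by
  have h₂ : padicValNat p ((n - j - 1).choose (k - j)) = 0 :=
    padicValNat_choose_eq_zero_of_lt (by omega) (by omega) fun i hi hdvd => by
      have := Nat.eq_of_dvd_of_dvd_of_lt_add hpn hdvd (by omega) (by omega)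
      omega
  split_ifs with hj
  · subst hj
    rw [Nat.choose_zero_right, padicValNat_one_right, zero_add, h₂]
  · rw [h₂, add_zero,
      padicValNat_choose_eq_of_dvd_sub (i₀ := 0) (by omega) (by omega) (by omega) (by simpa),
      Nat.sub_zero]

lemma padicValNat_choose_add_choose_of_dvd_sub {n k j : ℕ} (hkp : k < p) (hkn : k < n)
    (hpn : p ∣ n - k) (hjk : j ≤ k) :
    padicValNat p (n.choose j) + padicValNat p ((n - j - 1).choose (k - j)) =
      if j = k then 0 else padicValNat p (n - k) := by
  have h₁ : padicValNat p (n.choose j) = 0 :=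
    padicValNat_choose_eq_zero_of_lt (by omega) (by omega) fun i hi hdvd => by
      have := Nat.eq_of_dvd_of_dvd_of_lt_add hpn hdvd (by omega) (by omega)
      omega
  split_ifs with hj
  · subst hj
    rw [h₁, Nat.sub_self, Nat.choose_zero_right, padicValNat_one_right]
  · have hsub : n - j - 1 - (k - j - 1) = n - k := by omega
    rw [h₁, zero_add, padicValNat_choose_eq_of_dvd_sub (i₀ := k - j - 1) (by omega) (by omega)
      (by omega) (hsub ▸ hpn), hsub]

lemma padicValRat_intCast_mul_neg_one_pow_mul_mul {a : ℤ} (ha : ¬ (p : ℤ) ∣ a) (t : ℕ)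
    {m₁ m₂ : ℕ} (h₁ : m₁ ≠ 0) (h₂ : m₂ ≠ 0) :
    padicValRat p (a * ((-1) ^ t * m₁ * m₂)) = padicValNat p m₁ + padicValNat p m₂ := by
  have ha₀ : (a : ℚ) ≠ 0 := Int.cast_ne_zero.2 (by rintro rfl; exact ha (dvd_zero _))
  rw [padicValRat.mul ha₀ (by simp [h₁, h₂]), padicValRat.mul (by simp [h₁]) (by simp [h₂]),
    padicValRat.mul (by simp) (by simp [h₁])]
  simp [padicValInt.eq_zero_of_not_dvd ha]

end Binomial

namespace Rat.AbsoluteValue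

variable {p : ℕ} [Fact p.Prime]

lemma isNonarchimedean_padic : IsNonarchimedean (padic p) := fun x y => by
  simp only [padic_eq_padicNorm, le_max_iff]
  exact_mod_cast le_max_iff.1 (padicNorm.nonarchimedean (p := p) (q := x) (r := y))

lemma padic_pow_eq_zpow {x : ℚ} (hx : x ≠ 0) (d : ℕ) :
    padic p x ^ d = (p : ℝ) ^ (-(d * padicValRat p x)) := by
  rw [padic_eq_padicNorm, padicNorm.eq_zpow_of_nonzero hx]
  push_cast
  rw [← zpow_natCast, ← zpow_mul]
  ring_nf

lemma padic_mul_pow_pow_eq_zpow {x : ℚ} (hx : x ≠ 0) {c : ℝ} {d : ℕ} {z : ℤ}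
    (hcd : c ^ d = (p : ℝ) ^ z) (j : ℕ) :
    (padic p x * c ^ j) ^ d = (p : ℝ) ^ (z * j - d * padicValRat p x) := by
  have hp : (p : ℝ) ≠ 0 := by exact_mod_cast (Fact.out : p.Prime).ne_zero
  rw [mul_pow, padic_pow_eq_zpow hx, ← pow_mul, mul_comm j, pow_mul, hcd, ← zpow_natCast,
    ← zpow_mul, ← zpow_add₀ hp]
  ring_nf

end Rat.AbsoluteValue

namespace Polynomial

section GaussNorm

variable {R : Type*} [Ring R] {v : AbsoluteValue R ℝ} {c : ℝ}

lemma gaussNorm_pos (hc : 0 < c) {f : R[X]} (hf : f ≠ 0) : 0 < f.gaussNorm v c :=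
  (f.gaussNorm_nonneg v hc.le).lt_of_ne' fun h =>
    hf ((gaussNorm_eq_zero_iff v f (fun _ => v.eq_zero.1) hc).1 h)

theorem gaussNorm_eq_ends_of_dvd [NoZeroDivisors R] (hna : IsNonarchimedean v) (hc : 0 < c)
    {f g : R[X]} (hf : f ≠ 0) (hgf : g ∣ f) (h0 : f.gaussNorm v c = v (f.coeff 0))
    (hlead : f.gaussNorm v c = v f.leadingCoeff * c ^ f.natDegree) :
    g.gaussNorm v c = v (g.coeff 0) ∧ g.gaussNorm v c = v g.leadingCoeff * c ^ g.natDegree := by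
  obtain ⟨h, rfl⟩ := hgf
  have hg := left_ne_zero_of_mul hf
  have hh := right_ne_zero_of_mul hf
  have hpos := mul_pos (gaussNorm_pos (v := v) hc hg) (gaussNorm_pos (v := v) hc hh)
  rw [gaussNorm_mul hna hc] at h0 hlead
  rw [mul_coeff_zero, map_mul] at h0
  rw [leadingCoeff_mul, natDegree_mul hg hh, map_mul, pow_add, mul_mul_mul_comm] at hlead
  have hle0 (u : R[X]) : v (u.coeff 0) ≤ u.gaussNorm v c := by
    simpa using u.le_gaussNorm v hc.le 0
  -- each end of `g * h` is the product of the ends of `g` and `h`, each bounded by its Gauss norm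
  have hpos0 : 0 < v (g.coeff 0) := pos_of_mul_pos_left (h0 ▸ hpos) (v.nonneg _)
  have hposl : 0 < v g.leadingCoeff * c ^ g.natDegree :=
    pos_of_mul_pos_left (hlead ▸ hpos) (by positivity)
  exact ⟨(((mul_eq_mul_iff_eq_and_eq_of_pos (hle0 g) (hle0 h) hpos0
      (gaussNorm_pos hc hh)).1 h0.symm).1).symm,
    (((mul_eq_mul_iff_eq_and_eq_of_pos (g.le_gaussNorm v hc.le _) (h.le_gaussNorm v hc.le _)
      hposl (gaussNorm_pos hc hh)).1 hlead.symm).1).symm⟩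

end GaussNorm

open Rat.AbsoluteValue

/-- `f` is *pure* at `p` in Dumas' sense: every point `(j, v_p(f_j))` lies on or above the segment
from `(0, v_p(f_0))` to `(deg f, v_p(lc f))`, so that segment is the whole Newton polygon. -/
def IsPadicPure (p : ℕ) (f : ℚ[X]) : Prop :=
  ∀ j, f.coeff j ≠ 0 → (j : ℤ) * padicValRat p f.leadingCoeff +
    ((f.natDegree : ℤ) - j) * padicValRat p (f.coeff 0) ≤ f.natDegree * padicValRat p (f.coeff j)

lemma IsPadicPure.gaussNorm_eq_ends {p : ℕ} [Fact p.Prime] {f : ℚ[X]} (hf : IsPadicPure p f)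
    (hf0 : f.coeff 0 ≠ 0) (hd : f.natDegree ≠ 0) {c : ℝ} (hc : 0 < c)
    (hcd : c ^ f.natDegree =
      (p : ℝ) ^ (padicValRat p f.leadingCoeff - padicValRat p (f.coeff 0))) :
    f.gaussNorm (padic p) c = padic p (f.coeff 0) ∧
      f.gaussNorm (padic p) c = padic p f.leadingCoeff * c ^ f.natDegree := by
  have hp : (1 : ℝ) < p := by exact_mod_cast (Fact.out : p.Prime).one_lt
  have hnorm0 : f.gaussNorm (padic p) c = padic p (f.coeff 0) := by
    refine le_antisymm ?_ (by simpa using f.le_gaussNorm (padic p) hc.le 0)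
    obtain ⟨j, hj⟩ := f.exists_eq_gaussNorm (padic p) c
    rw [hj]
    by_cases hfj : f.coeff j = 0
    · rw [hfj, map_zero, zero_mul]
      exact (padic p).nonneg _
    rw [← pow_le_pow_iff_left₀ (by positivity) (by positivity) hd,
      padic_mul_pow_pow_eq_zpow hfj hcd, padic_pow_eq_zpow hf0, zpow_le_zpow_iff_right₀ hp]
    linear_combination hf j hfj
  refine ⟨hnorm0, ?_⟩
  have hf_ne : f ≠ 0 := fun h => hf0 (by simp [h])
  rw [hnorm0, ← pow_left_inj₀ (by positivity) (by positivity) hd,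
    padic_mul_pow_pow_eq_zpow (leadingCoeff_ne_zero.2 hf_ne) hcd, padic_pow_eq_zpow hf0]
  congr 1
  ring

theorem IsPadicPure.natDegree_dvd_mul_natDegree_of_dvd {p : ℕ} [Fact p.Prime] {f g : ℚ[X]}
    (hf : IsPadicPure p f) (hf0 : f.coeff 0 ≠ 0) (hgf : g ∣ f) :
    (f.natDegree : ℤ) ∣
      (padicValRat p f.leadingCoeff - padicValRat p (f.coeff 0)) * g.natDegree := by
  set d := f.natDegree
  set z := padicValRat p f.leadingCoeff - padicValRat p (f.coeff 0)
  have hf_ne : f ≠ 0 := fun h => hf0 (by simp [h])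
  rcases eq_or_ne d 0 with hd | hd
  · have : g.natDegree = 0 := Nat.le_zero.1 (hd ▸ natDegree_le_of_dvd hgf hf_ne)
    simp [this]
  have hp : (1 : ℝ) < p := by exact_mod_cast (Fact.out : p.Prime).one_lt
  -- `c = p^(z/d)`; it is only ever used through `c ^ d = p ^ z`, after raising to the `d`-th power
  obtain ⟨c, hc, hcd⟩ : ∃ c : ℝ, 0 < c ∧ c ^ d = (p : ℝ) ^ z :=
    ⟨_, by positivity, Real.rpow_inv_natCast_pow (by positivity) hd⟩
  obtain ⟨hnorm0, hnormlead⟩ := hf.gaussNorm_eq_ends hf0 hd hc hcd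
  obtain ⟨hg0, hglead⟩ :=
    gaussNorm_eq_ends_of_dvd isNonarchimedean_padic hc hf_ne hgf hnorm0 hnormlead
  have hg_ne : g ≠ 0 := ne_zero_of_dvd_ne_zero hf_ne hgf
  have hg0_ne : g.coeff 0 ≠ 0 := fun h =>
    (gaussNorm_pos hc hg_ne).ne' (by rw [hg0, h, map_zero])
  have hpow := congrArg (· ^ d) (hg0.symm.trans hglead)
  simp only [padic_pow_eq_zpow hg0_ne,
    padic_mul_pow_pow_eq_zpow (leadingCoeff_ne_zero.2 hg_ne) hcd] at hpow
  have := zpow_right_injective₀ (by positivity) hp.ne' hpow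
  exact ⟨padicValRat p g.leadingCoeff - padicValRat p (g.coeff 0), by linear_combination -this⟩

lemma coeff_sum_range_C_mul_X_pow {R : Type*} [Semiring R] (q : ℕ → R) (k j : ℕ) :
    (∑ i ∈ range (k + 1), C (q i) * X ^ i).coeff j = if j ≤ k then q j else 0 := by
  simp

theorem dvd_mul_natDegree_of_dvd_sum_C_mul_X_pow {p : ℕ} [Fact p.Prime] {q : ℕ → ℚ} {k : ℕ}
    (hq0 : q 0 ≠ 0) (hqk : q k ≠ 0)
    (hpure : ∀ j ≤ k, q j ≠ 0 → (j : ℤ) * padicValRat p (q k) +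
      ((k : ℤ) - j) * padicValRat p (q 0) ≤ k * padicValRat p (q j))
    {g : ℚ[X]} (hg : g ∣ ∑ j ∈ range (k + 1), C (q j) * X ^ j) :
    (k : ℤ) ∣ (padicValRat p (q k) - padicValRat p (q 0)) * g.natDegree := by
  set F := ∑ j ∈ range (k + 1), C (q j) * X ^ j
  have hcoeff := coeff_sum_range_C_mul_X_pow q k
  have hdeg : F.natDegree = k := natDegree_eq_of_le_of_coeff_ne_zero
    (natDegree_le_iff_coeff_eq_zero.2 fun j hj => by rw [hcoeff, if_neg (by omega)])
    (by rwa [hcoeff, if_pos le_rfl])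
  have h0 : F.coeff 0 = q 0 := by rw [hcoeff, if_pos (Nat.zero_le k)]
  have hlead : F.leadingCoeff = q k := by rw [leadingCoeff, hdeg, hcoeff, if_pos le_rfl]
  have hF : IsPadicPure p F := fun j hj => by
    have hjk : j ≤ k := by by_contra h; rw [hcoeff, if_neg h] at hj; exact hj rfl
    rw [hcoeff, if_pos hjk] at hj
    rw [hdeg, hlead, h0, hcoeff, if_pos hjk]
    exact hpure j hjk hj
  simpa only [hdeg, hlead, h0] using hF.natDegree_dvd_mul_natDegree_of_dvd (h0 ▸ hq0) hg

theorem dvd_mul_natDegree_of_dvd_sum_of_padicValRat_zero_left {p : ℕ} [Fact p.Prime]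
    {q : ℕ → ℚ} {k e : ℕ} (hk : k ≠ 0) (hq0 : q 0 ≠ 0) (hqk : q k ≠ 0)
    (hv : ∀ j ≤ k, padicValRat p (q j) = if j = 0 then 0 else (e : ℤ)) {g : ℚ[X]}
    (hg : g ∣ ∑ j ∈ range (k + 1), C (q j) * X ^ j) : k ∣ e * g.natDegree := by
  have := dvd_mul_natDegree_of_dvd_sum_C_mul_X_pow (p := p) hq0 hqk (fun j hj _ => ?_) hg
  · rw [hv k le_rfl, hv 0 k.zero_le, if_neg hk, if_pos rfl, sub_zero] at this
    exact_mod_cast this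
  · have : (j : ℤ) ≤ k := by exact_mod_cast hj
    rw [hv j hj, hv k le_rfl, hv 0 k.zero_le, if_neg hk, if_pos rfl]
    split_ifs with hj0
    · simp [hj0]
    · nlinarith [e.cast_nonneg (α := ℤ)]

theorem dvd_mul_natDegree_of_dvd_sum_of_padicValRat_zero_right {p : ℕ} [Fact p.Prime]
    {q : ℕ → ℚ} {k e : ℕ} (hk : k ≠ 0) (hq0 : q 0 ≠ 0) (hqk : q k ≠ 0)
    (hv : ∀ j ≤ k, padicValRat p (q j) = if j = k then 0 else (e : ℤ)) {g : ℚ[X]}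
    (hg : g ∣ ∑ j ∈ range (k + 1), C (q j) * X ^ j) : k ∣ e * g.natDegree := by
  have := dvd_mul_natDegree_of_dvd_sum_C_mul_X_pow (p := p) hq0 hqk (fun j hj _ => ?_) hg
  · rw [hv k le_rfl, hv 0 k.zero_le, if_pos rfl, if_neg (Ne.symm hk), zero_sub, neg_mul,
      dvd_neg] at this
    exact_mod_cast this
  · have : (j : ℤ) ≤ k := by exact_mod_cast hj
    rw [hv j hj, hv k le_rfl, hv 0 k.zero_le, if_pos rfl, if_neg (Ne.symm hk)]
    split_ifs with hjk
    · simp [hjk]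
    · nlinarith [e.cast_nonneg (α := ℤ)]

end Polynomial

open Polynomial in
theorem irreducible_factor_degree_dvd_general (n k : ℕ) (hk : 1 ≤ k) (hkn : k ≤ n - 1) (p e : ℕ)
    (hp : p.Prime) (hpk : k < p) (he : 0 < e)
    (hval : e = padicValNat p n ∨ e = padicValNat p (n - k)) (a : ℕ → ℤ)
    (ha : ∀ j ≤ k, ∀ q : ℕ, q.Prime → (q : ℤ) ∣ a j → q ≤ k) :
    ∀ g : ℚ[X], Irreducible g →
      g ∣ (∑ j ∈ Finset.range (k + 1),
        C ((a j : ℚ) * ((-1 : ℚ) ^ (k - j) * (n.choose j : ℚ) *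
          ((n - j - 1).choose (k - j) : ℚ))) * X ^ j) →
      k / Nat.gcd k e ∣ g.natDegree := by
  have := Fact.mk hp
  intro g _ hgF
  set q : ℕ → ℚ := fun j => (a j : ℚ) * ((-1 : ℚ) ^ (k - j) * (n.choose j : ℚ) *
    ((n - j - 1).choose (k - j) : ℚ))
  have hpa : ∀ j ≤ k, ¬ (p : ℤ) ∣ a j := fun j hj h => (ha j hj p hp h).not_gt hpk
  have hq : ∀ j ≤ k, q j ≠ 0 := fun j hj => by
    have : a j ≠ 0 := by rintro h; exact hpa j hj (h ▸ dvd_zero _)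
    simp [q, this, Nat.choose_eq_zero_iff]
    omega
  have hv : ∀ j ≤ k, padicValRat p (q j) =
      ↑(padicValNat p (n.choose j) + padicValNat p ((n - j - 1).choose (k - j))) := fun j hj =>
    padicValRat_intCast_mul_neg_one_pow_mul_mul (hpa j hj) _
      (Nat.choose_pos (by omega)).ne' (Nat.choose_pos (by omega)).ne'
  refine Nat.div_gcd_dvd_of_dvd_mul hk ?_
  rcases hval with rfl | rfl
  · refine dvd_mul_natDegree_of_dvd_sum_of_padicValRat_zero_left (p := p) (by omega)
      (hq 0 k.zero_le) (hq k le_rfl) (fun j hj => ?_) hgF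
    rw [hv j hj, padicValNat_choose_add_choose_of_dvd hpk (by omega)
      (dvd_of_one_le_padicValNat he) hj]
    split_ifs <;> rfl
  · refine dvd_mul_natDegree_of_dvd_sum_of_padicValRat_zero_right (p := p) (by omega)
      (hq 0 k.zero_le) (hq k le_rfl) (fun j hj => ?_) hgF
    rw [hv j hj, padicValNat_choose_add_choose_of_dvd_sub hpk (by omega)
      (dvd_of_one_le_padicValNat he) hj]
    split_ifs <;> rfl

open Polynomial in
theorem irreducible_factor_degree_dvd (n k : ℕ) (hk : 1 ≤ k) (hkn : k ≤ n - 1) (p e : ℕ)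
    (hp : p.Prime) (hpk : k < p) (he : 0 < e)
    (hval : e = padicValNat p n ∨ e = padicValNat p (n - k)) (a : ℕ → ℤ)
    (ha0 : ∀ j ≤ k, a j ≠ 0) (ha : ∀ j ≤ k, ∀ q : ℕ, q.Prime → (q : ℤ) ∣ a j → q ≤ k) :
    ∀ g : ℚ[X], Irreducible g →
      g ∣ (∑ j ∈ Finset.range (k + 1),
        C ((a j : ℚ) * ((-1 : ℚ) ^ (k - j) * (n.choose j : ℚ) *
          ((n - j - 1).choose (k - j) : ℚ))) * X ^ j) →
      k / Nat.gcd k e ∣ g.natDegree :=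
  irreducible_factor_degree_dvd_general n k hk hkn p e hp hpk he hval a ha
end
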